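/- arXiv:2410.06829 — 7 statements merged into one kernel-verified Lean document; each statement's English description precedes it below -/
import Mathlib

section
/- Let k ≥ 2 be an integer and let G be a finite simple graph of order n ≥ 2 with at least one edge, with Laplacian eigenvalues μ_1 ≥ μ_2 ≥ … ≥ μ_n = 0. If 2·μ_1 ≤ (2k+1)·μ_{n-1}, then for every subset S ⊆ V(G), 2·i(G−S) ≤ (2k+1)·|S|. -/
open Matrix Finset

variable {n : ℕ}

lemma repr_mulVec (L : Matrix (Fin n) (Fin n) ℝ) (hL : L.IsHermitian)
    (x : EuclideanSpace ℝ (Fin n)) (j : Fin n) :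
    hL.eigenvectorBasis.repr ((WithLp.equiv 2 _).symm (L *ᵥ x)) j
      = hL.eigenvalues j * hL.eigenvectorBasis.repr x j := by
  have hsym : Lᵀ = L := by
    rw [← conjTranspose_eq_transpose_of_trivial]; exact hL
  have h2 : ∀ v : Fin n → ℝ, v ᵥ* L = L *ᵥ v := by
    intro v
    conv_lhs => rw [← hsym]
    rw [vecMul_transpose]
  rw [OrthonormalBasis.repr_apply_apply, OrthonormalBasis.repr_apply_apply]
  rw [EuclideanSpace.inner_eq_star_dotProduct, EuclideanSpace.inner_eq_star_dotProduct]
  simp only [star_trivial, Equiv.apply_symm_apply, WithLp.equiv_symm_apply, WithLp.ofLp_toLp]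
  rw [dotProduct_comm, dotProduct_mulVec, h2, hL.mulVec_eigenvectorBasis j, smul_dotProduct, smul_eq_mul]
  rw [dotProduct_comm]

lemma quad_eq (L : Matrix (Fin n) (Fin n) ℝ) (hL : L.IsHermitian)
    (x : EuclideanSpace ℝ (Fin n)) :
    (x : Fin n → ℝ) ⬝ᵥ (L *ᵥ x)
      = ∑ j, hL.eigenvalues j * (hL.eigenvectorBasis.repr x j)^2 := by
  have h0 : (x : Fin n → ℝ) ⬝ᵥ (L *ᵥ x)
      = inner ℝ x ((WithLp.equiv 2 (Fin n → ℝ)).symm (L *ᵥ x)) := by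
    rw [EuclideanSpace.inner_eq_star_dotProduct]
    simp only [star_trivial, Equiv.apply_symm_apply]
    exact dotProduct_comm _ _
  rw [h0, ← (hL.eigenvectorBasis.repr).inner_map_map x, PiLp.inner_apply]
  apply Finset.sum_congr rfl
  intro j _
  rw [repr_mulVec L hL x j]
  simp [RCLike.inner_apply]
  ring

lemma norm_eq' (L : Matrix (Fin n) (Fin n) ℝ) (hL : L.IsHermitian)
    (x : EuclideanSpace ℝ (Fin n)) :
    ∑ i, (x i)^2 = ∑ j, (hL.eigenvectorBasis.repr x j)^2 := by
  have h1 : (inner ℝ x x : ℝ) = ∑ i, (x i)^2 := by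
    rw [PiLp.inner_apply]
    apply Finset.sum_congr rfl
    intro j _
    simp [RCLike.inner_apply]
  have h2 : (inner ℝ (hL.eigenvectorBasis.repr x) (hL.eigenvectorBasis.repr x) : ℝ)
      = ∑ j, (hL.eigenvectorBasis.repr x j)^2 := by
    rw [PiLp.inner_apply]
    apply Finset.sum_congr rfl
    intro j _
    simp [RCLike.inner_apply]
  rw [← h1, ← (hL.eigenvectorBasis.repr).inner_map_map x x, h2]

lemma rayleigh_upper (L : Matrix (Fin n) (Fin n) ℝ) (hL : L.IsHermitian)
    (μ0 : ℝ) (hub : ∀ j, hL.eigenvalues j ≤ μ0) (x : EuclideanSpace ℝ (Fin n)) :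
    (x : Fin n → ℝ) ⬝ᵥ (L *ᵥ x) ≤ μ0 * ∑ i, (x i)^2 := by
  rw [quad_eq L hL, norm_eq' L hL, Finset.mul_sum]
  apply Finset.sum_le_sum
  intro j _
  exact mul_le_mul_of_nonneg_right (hub j) (sq_nonneg _)

lemma rayleigh_lower (hn : 0 < n) (L : Matrix (Fin n) (Fin n) ℝ) (hL : L.IsHermitian)
    (hker : L *ᵥ (fun _ => (1:ℝ)) = 0)
    (j0 : Fin n) (hj0 : hL.eigenvalues j0 = 0)
    (μ2 : ℝ) (hμ2 : 0 < μ2) (hlb : ∀ j, j ≠ j0 → μ2 ≤ hL.eigenvalues j)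
    (x : EuclideanSpace ℝ (Fin n)) (hx : ∑ i, x i = 0) :
    μ2 * ∑ i, (x i)^2 ≤ (x : Fin n → ℝ) ⬝ᵥ (L *ᵥ x) := by
  classical
  set B := hL.eigenvectorBasis with hB
  set o : EuclideanSpace ℝ (Fin n) := (WithLp.equiv 2 (Fin n → ℝ)).symm (fun _ => 1) with ho
  -- Q(o) = 0
  have hQo : ∑ j, hL.eigenvalues j * (B.repr o j)^2 = 0 := by
    rw [← quad_eq L hL o]
    have : (o : Fin n → ℝ) = (fun _ => 1) := rfl
    rw [this, hker]
    simp
  -- each term vanishes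
  have hterm : ∀ j, j ≠ j0 → B.repr o j = 0 := by
    intro j hj
    have hnn : ∀ j' ∈ Finset.univ, (0:ℝ) ≤ hL.eigenvalues j' * (B.repr o j')^2 := by
      intro j' _
      rcases eq_or_ne j' j0 with h | h
      · rw [h, hj0]; simp
      · exact mul_nonneg (le_of_lt (lt_of_lt_of_le hμ2 (hlb j' h))) (sq_nonneg _)
    have := (Finset.sum_eq_zero_iff_of_nonneg hnn).1 hQo j (Finset.mem_univ j)
    have hevpos : 0 < hL.eigenvalues j := lt_of_lt_of_le hμ2 (hlb j hj)
    have := mul_eq_zero.1 this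
    rcases this with h | h
    · exact absurd h (ne_of_gt hevpos)
    · exact pow_eq_zero_iff (by norm_num) |>.1 h
  -- o = c • B j0
  have hsum : o = (B.repr o j0) • B j0 := by
    conv_lhs => rw [← B.sum_repr o]
    rw [Finset.sum_eq_single j0]
    · intro b _ hb
      rw [hterm b hb, zero_smul]
    · intro h; exact absurd (Finset.mem_univ j0) h
  have hc : B.repr o j0 ≠ 0 := by
    intro h
    rw [h, zero_smul] at hsum
    have : o ⟨0, hn⟩ = 1 := rfl
    rw [hsum] at this
    simp at this
  -- B.repr x j0 = 0
  have hxj0 : B.repr x j0 = 0 := by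
    have hox : (inner ℝ o x : ℝ) = 0 := by
      rw [PiLp.inner_apply]
      simp only [RCLike.inner_apply, conj_trivial]
      have : ∀ i, o i = 1 := fun i => rfl
      simp only [this, one_mul, mul_one]
      exact hx
    rw [hsum, inner_smul_left] at hox
    simp only [conj_trivial] at hox
    rcases mul_eq_zero.1 hox with h | h
    · exact absurd h hc
    · rw [← B.repr_apply_apply] at h; exact h
  rw [quad_eq L hL, norm_eq' L hL]
  rw [← Finset.add_sum_erase _ _ (Finset.mem_univ j0), ← Finset.add_sum_erase _ _ (Finset.mem_univ j0)]
  rw [hj0, hxj0, mul_add]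
  simp only [zero_mul, ne_eq, OfNat.ofNat_ne_zero, not_false_iff, zero_pow, mul_zero, zero_add]
  rw [Finset.mul_sum]
  apply Finset.sum_le_sum
  intro j hj
  have hjne : j ≠ j0 := Finset.ne_of_mem_erase hj
  exact mul_le_mul_of_nonneg_right (hlb j hjne) (sq_nonneg _)

open SimpleGraph in
lemma quadform_pair (G : SimpleGraph (Fin n)) [DecidableRel G.Adj] (u v : Fin n)
    (huv : u ≠ v) :
    (fun i => if i = u then (1:ℝ) else if i = v then -1 else 0) ⬝ᵥ
      (G.lapMatrix ℝ *ᵥ (fun i => if i = u then (1:ℝ) else if i = v then -1 else 0))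
      = (G.degree u + G.degree v : ℝ) + (if G.Adj u v then 2 else 0) := by
  set x : Fin n → ℝ := fun i => if i = u then (1:ℝ) else if i = v then -1 else 0 with hx
  have hxu : x u = 1 := by simp [hx]
  have hxv : x v = -1 := by simp [hx, huv.symm]
  have hnbr : ∀ w : Fin n, ∑ z ∈ G.neighborFinset w, x z
      = (if G.Adj w u then 1 else 0) - (if G.Adj w v then 1 else 0) := by
    intro w
    have : ∀ z : Fin n, x z = (if z = u then (1:ℝ) else 0) + (if z = v then -1 else 0) := by
      intro z
      by_cases h1 : z = u
      · subst h1; simp [hx, huv]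
      · by_cases h2 : z = v
        · simp only [hx, if_neg h1, if_pos h2]; ring
        · simp [hx, h1, h2]
    simp_rw [this, Finset.sum_add_distrib]
    rw [Finset.sum_ite_eq' _ u, Finset.sum_ite_eq' _ v]
    simp [SimpleGraph.mem_neighborFinset]
    split_ifs <;> ring
  have hsupp : ∀ i : Fin n, i ∉ ({u, v} : Finset (Fin n)) → x i * (G.lapMatrix ℝ *ᵥ x) i = 0 := by
    intro i hi
    simp only [Finset.mem_insert, Finset.mem_singleton, not_or] at hi
    have : x i = 0 := by simp [hx, hi.1, hi.2]
    rw [this, zero_mul]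
  have : x ⬝ᵥ (G.lapMatrix ℝ *ᵥ x) = ∑ i ∈ ({u, v} : Finset (Fin n)), x i * (G.lapMatrix ℝ *ᵥ x) i := by
    rw [dotProduct]
    exact (Finset.sum_subset (Finset.subset_univ _) (fun i _ hi => hsupp i hi)).symm
  rw [this, Finset.sum_pair huv]
  rw [lapMatrix_mulVec_apply, lapMatrix_mulVec_apply, hnbr, hnbr, hxu, hxv]
  have h1 : ¬ G.Adj u u := G.irrefl
  have h2 : ¬ G.Adj v v := G.irrefl
  have h3 : G.Adj v u ↔ G.Adj u v := G.adj_comm v u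
  simp only [h1, h2, if_false, if_true]
  by_cases h : G.Adj u v
  · simp [h, h3.2 h]; ring
  · simp only [h, if_false, show ¬ G.Adj v u from fun hc => h (h3.1 hc)]
    ring

lemma normsq_pair (u v : Fin n) (huv : u ≠ v) :
    ∑ i, ((fun i => if i = u then (1:ℝ) else if i = v then -1 else 0) i)^2 = 2 := by
  have : ∀ i : Fin n, ((if i = u then (1:ℝ) else if i = v then -1 else 0))^2
      = (if i = u then (1:ℝ) else 0) + (if i = v then 1 else 0) := by
    intro i
    by_cases h1 : i = u
    · subst h1; simp [huv]
    · by_cases h2 : i = v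
      · simp only [if_neg h1, if_pos h2]; ring
      · simp [h1, h2]
  simp_rw [this, Finset.sum_add_distrib, Finset.sum_ite_eq' _ u, Finset.sum_ite_eq' _ v]
  norm_num

open SimpleGraph in
lemma mulVec_isolated (G : SimpleGraph (Fin n)) [DecidableRel G.Adj] (v : Fin n)
    (hiso : ∀ u, ¬ G.Adj v u) :
    G.lapMatrix ℝ *ᵥ (fun i => if i = v then (n:ℝ)-1 else -1) = 0 := by
  funext i
  rw [lapMatrix_mulVec_apply]
  by_cases h : i = v
  · subst h
    have hd : G.degree i = 0 := by
      rw [SimpleGraph.degree, Finset.card_eq_zero, Finset.eq_empty_iff_forall_notMem]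
      intro u hu
      exact hiso u ((SimpleGraph.mem_neighborFinset G i u).1 hu)
    have hN : G.neighborFinset i = ∅ := by
      rw [Finset.eq_empty_iff_forall_notMem]
      intro u hu
      exact hiso u ((SimpleGraph.mem_neighborFinset G i u).1 hu)
    rw [hd, hN]
    simp
  · have hall : ∀ u ∈ G.neighborFinset i, (if u = v then (n:ℝ)-1 else -1) = -1 := by
      intro u hu
      have hadj : G.Adj i u := (SimpleGraph.mem_neighborFinset G i u).1 hu
      have huv : u ≠ v := by
        intro he; subst he
        exact hiso i hadj.symm
      rw [if_neg huv]
    rw [Finset.sum_congr rfl hall, if_neg h, Finset.sum_const, nsmul_eq_mul]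
    have hcard : ((G.neighborFinset i).card : ℝ) = (G.degree i : ℝ) := rfl
    rw [hcard, Pi.zero_apply]
    ring

open SimpleGraph in
lemma quadform_star (G : SimpleGraph (Fin n)) [DecidableRel G.Adj] (w : Fin n)
    (T : Finset (Fin n)) (hwT : w ∉ T) (hadj : ∀ v ∈ T, G.Adj w v) :
    ((T.card : ℝ)) * ((T.card : ℝ)+1)^2 ≤
      (fun i => if i = w then (T.card:ℝ) else if i ∈ T then -1 else 0) ⬝ᵥ
      (G.lapMatrix ℝ *ᵥ (fun i => if i = w then (T.card:ℝ) else if i ∈ T then -1 else 0)) := by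
  set t : ℝ := (T.card : ℝ) with ht
  set x : Fin n → ℝ := fun i => if i = w then t else if i ∈ T then -1 else 0 with hx
  have hQ : x ⬝ᵥ (G.lapMatrix ℝ *ᵥ x) =
      (∑ i, ∑ j, if G.Adj i j then (x i - x j)^2 else 0) / 2 := by
    rw [← lapMatrix_toLinearMap₂' ℝ G x, Matrix.toLinearMap₂'_apply']
  set h : Fin n → ℝ := fun i => ∑ j, if G.Adj i j then (x i - x j)^2 else 0 with hh
  have hnonneg : ∀ i, 0 ≤ h i := by
    intro i
    apply Finset.sum_nonneg
    intro j _
    split_ifs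
    · exact sq_nonneg _
    · exact le_refl 0
  have hterm_nonneg : ∀ (a b : Fin n), (0:ℝ) ≤ if G.Adj a b then (x a - x b)^2 else 0 := by
    intro a b
    split_ifs
    · exact sq_nonneg _
    · exact le_refl 0
  have hhw : t * (t+1)^2 ≤ h w := by
    rw [hh]
    calc t * (t+1)^2 = ∑ _j ∈ T, ((t+1)^2 : ℝ) := by
          rw [Finset.sum_const, nsmul_eq_mul, ht]
      _ = ∑ j ∈ T, (if G.Adj w j then (x w - x j)^2 else 0) := by
          apply Finset.sum_congr rfl
          intro j hj
          have hjw : j ≠ w := fun hjw => hwT (hjw ▸ hj)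
          have hxw : x w = t := by simp [hx]
          have hxj : x j = -1 := by simp [hx, hjw, hj]
          rw [if_pos (hadj j hj), hxw, hxj]
          ring
      _ ≤ ∑ j, (if G.Adj w j then (x w - x j)^2 else 0) :=
          Finset.sum_le_sum_of_subset_of_nonneg (Finset.subset_univ T)
            (fun j _ _ => hterm_nonneg w j)
  have hhv : ∀ v ∈ T, (t+1)^2 ≤ h v := by
    intro v hv
    have hvw : v ≠ w := fun hvw => hwT (hvw ▸ hv)
    have hxv : x v = -1 := by simp [hx, hvw, hv]
    have hxw : x w = t := by simp [hx]
    have hsingle := Finset.single_le_sum (f := fun j => if G.Adj v j then (x v - x j)^2 else 0)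
      (fun j _ => hterm_nonneg v j) (Finset.mem_univ w)
    rw [hh]
    refine le_trans ?_ hsingle
    simp only [if_pos ((hadj v hv).symm), hxv, hxw]
    nlinarith [sq_nonneg (t+1)]
  have hsum : 2 * (t * (t+1)^2) ≤ univ.sum h := by
    have hsub : t * (t+1)^2 + ∑ v ∈ T, (t+1)^2 ≤ h w + ∑ v ∈ T, h v := by
      apply add_le_add hhw (Finset.sum_le_sum hhv)
    have h2 : h w + ∑ v ∈ T, h v = ∑ i ∈ insert w T, h i := (Finset.sum_insert hwT).symm
    have h3 : ∑ i ∈ insert w T, h i ≤ univ.sum h :=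
      Finset.sum_le_sum_of_subset_of_nonneg (Finset.subset_univ _) (fun i _ _ => hnonneg i)
    have h4 : (∑ _v ∈ T, ((t+1)^2:ℝ)) = t * (t+1)^2 := by
      rw [Finset.sum_const, nsmul_eq_mul, ht]
    linarith [hsub.trans (h2 ▸ h3)]
  rw [hQ]
  linarith

lemma normsq_star (w : Fin n) (T : Finset (Fin n)) (hwT : w ∉ T) :
    ∑ i, ((fun i => if i = w then (T.card:ℝ) else if i ∈ T then -1 else 0) i)^2
      = (T.card:ℝ)^2 + T.card := by
  set t : ℝ := (T.card : ℝ) with ht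
  set x : Fin n → ℝ := fun i => if i = w then t else if i ∈ T then -1 else 0 with hx
  have hzero : ∀ i ∈ Finset.univ, i ∉ insert w T → x i ^ 2 = 0 := by
    intro i _ hi
    simp only [Finset.mem_insert, not_or] at hi
    simp [hx, hi.1, hi.2]
  rw [← Finset.sum_subset (Finset.subset_univ (insert w T)) hzero]
  rw [Finset.sum_insert hwT]
  have hxw : x w = t := by simp [hx]
  have hT : ∀ v ∈ T, x v ^ 2 = 1 := by
    intro v hv
    have hvw : v ≠ w := fun hvw => hwT (hvw ▸ hv)
    simp [hx, hvw, hv]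
  rw [hxw, Finset.sum_congr rfl hT, Finset.sum_const, nsmul_eq_mul]
  ring

lemma sum_pair_vec (u v : Fin n) (huv : u ≠ v) :
    ∑ i, (fun i => if i = u then (1:ℝ) else if i = v then -1 else 0) i = 0 := by
  have h : ∀ i : Fin n, ((if i = u then (1:ℝ) else if i = v then -1 else 0))
      = (if i = u then (1:ℝ) else 0) + (if i = v then -1 else 0) := by
    intro i
    by_cases h1 : i = u
    · subst h1; simp [huv]
    · by_cases h2 : i = v
      · simp only [if_neg h1, if_pos h2]; ring
      · simp [h1, h2]
  simp_rw [h, Finset.sum_add_distrib, Finset.sum_ite_eq' _ u, Finset.sum_ite_eq' _ v]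
  simp


/-- The number of isolated vertices of the induced subgraph `G − S`:
vertices outside `S` having no neighbor outside `S`. -/
def isoCount {V : Type*} [Fintype V] [DecidableEq V] (G : SimpleGraph V)
    [DecidableRel G.Adj] (S : Finset V) : ℕ :=
  (Finset.univ.filter (fun v => v ∉ S ∧ ∀ w, w ∉ S → ¬ G.Adj v w)).card

set_option maxHeartbeats 3200000 in
/-- **Theorem 1.2.** Let `k ≥ 2` and let `G` be a graph of order `n ≥ 2` with at least
one edge, with Laplacian eigenvalues `μ 0 ≥ μ 1 ≥ … ≥ μ (n-1) = 0` (so `μ_1 = μ 0` and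
`μ_{n-1} = μ (n-2)` in the paper's notation).  If `2·μ_1 ≤ (2k+1)·μ_{n-1}`, then for every
`S ⊆ V(G)` we have `2·i(G−S) ≤ (2k+1)·|S|`. -/
theorem stmt0 {n : ℕ} (hn : 2 ≤ n) (k : ℕ) (hk : 2 ≤ k)
    (G : SimpleGraph (Fin n)) [DecidableRel G.Adj]
    (hedge : G.edgeSet.Nonempty)
    (μ : Fin n → ℝ) (hmono : Antitone μ)
    (hlist : ∃ e : Fin n ≃ Fin n,
      ∀ i, (SimpleGraph.posSemidef_lapMatrix ℝ G).isHermitian.eigenvalues i = μ (e i))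
    (hlast : μ ⟨n - 1, by omega⟩ = 0)
    (hcond : 2 * μ ⟨0, by omega⟩ ≤ (2 * (k : ℝ) + 1) * μ ⟨n - 2, by omega⟩) :
    ∀ S : Finset (Fin n), 2 * isoCount G S ≤ (2 * k + 1) * S.card := by
  intro S
  by_contra hcon
  push_neg at hcon
  obtain ⟨I, hIdef⟩ : ∃ I : Finset (Fin n),
      I = Finset.univ.filter (fun v => v ∉ S ∧ ∀ w, w ∉ S → ¬ G.Adj v w) := ⟨_, rfl⟩
  have hIcard : isoCount G S = I.card := by
    rw [hIdef]
    unfold isoCount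
    exact congrArg Finset.card (Finset.filter_congr_decidable _ _ _)
  rw [hIcard] at hcon
  have hL : (G.lapMatrix ℝ).IsHermitian := (SimpleGraph.posSemidef_lapMatrix ℝ G).isHermitian
  obtain ⟨e, he⟩ := hlist
  have he' : ∀ j, hL.eigenvalues j = μ (e j) := he
  obtain ⟨i0, hi0⟩ : ∃ x : Fin n, x = ⟨0, by omega⟩ := ⟨_, rfl⟩
  obtain ⟨iN, hiN⟩ : ∃ x : Fin n, x = ⟨n-1, by omega⟩ := ⟨_, rfl⟩
  obtain ⟨iM, hiM⟩ : ∃ x : Fin n, x = ⟨n-2, by omega⟩ := ⟨_, rfl⟩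
  have hlast' : μ iN = 0 := by rw [hiN]; exact hlast
  have hcond' : 2 * μ i0 ≤ (2 * (k:ℝ) + 1) * μ iM := by rw [hi0, hiM]; exact hcond
  clear hlast hcond
  have hub : ∀ j, hL.eigenvalues j ≤ μ i0 := by
    intro j
    rw [he' j]
    exact hmono (by rw [hi0]; simp [Fin.le_def])
  obtain ⟨j0, hj0def⟩ : ∃ x : Fin n, x = e.symm iN := ⟨_, rfl⟩
  have hj0 : hL.eigenvalues j0 = 0 := by
    rw [he' j0, hj0def, Equiv.apply_symm_apply]
    exact hlast'
  have hlb : ∀ j, j ≠ j0 → μ iM ≤ hL.eigenvalues j := by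
    intro j hj
    rw [he' j]
    apply hmono
    have hne : e j ≠ iN := by
      intro h
      exact hj (by rw [hj0def, ← h, Equiv.symm_apply_apply])
    have hval : (e j : ℕ) ≠ n - 1 := fun h => hne (by rw [hiN]; exact Fin.ext h)
    have := (e j).isLt
    rw [Fin.le_def]
    rw [hiM]
    simp only []
    omega
  have hker : G.lapMatrix ℝ *ᵥ (fun _ => (1:ℝ)) = 0 := SimpleGraph.lapMatrix_mulVec_const_eq_zero G
  have hn0 : 0 < n := by omega
  -- μ0 > 0
  have hμ0 : 0 < μ i0 := by
    obtain ⟨a, b, hab⟩ : ∃ a b, G.Adj a b := by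
      obtain ⟨ed, hm⟩ := hedge
      induction ed using Sym2.ind with
      | _ a b => exact ⟨a, b, (SimpleGraph.mem_edgeSet G).1 hm⟩
    have hne : a ≠ b := G.ne_of_adj hab
    have h1 := rayleigh_upper (G.lapMatrix ℝ) hL (μ i0) hub
      ((WithLp.equiv 2 (Fin n → ℝ)).symm (fun i => if i = a then (1:ℝ) else if i = b then -1 else 0))
    have h2 : (fun i => if i = a then (1:ℝ) else if i = b then -1 else 0) ⬝ᵥ
        (G.lapMatrix ℝ *ᵥ (fun i => if i = a then (1:ℝ) else if i = b then -1 else 0)) ≤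
        μ i0 * ∑ i, ((fun i => if i = a then (1:ℝ) else if i = b then -1 else 0) i)^2 := h1
    rw [quadform_pair G a b hne, normsq_pair a b hne, if_pos hab] at h2
    have ha0 : (0:ℝ) ≤ G.degree a := Nat.cast_nonneg _
    have hb0 : (0:ℝ) ≤ G.degree b := Nat.cast_nonneg _
    linarith
  -- μ2 > 0
  have hμ2 : 0 < μ iM := by
    nlinarith [hcond', hμ0, Nat.cast_nonneg (α := ℝ) k]
  -- every vertex of I has positive degree
  have hdeg : ∀ v ∈ I, 0 < G.degree v := by
    intro v hv
    by_contra hd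
    have hd0 : G.degree v = 0 := by omega
    have hiso : ∀ u, ¬ G.Adj v u := by
      intro u hadj
      have : u ∈ G.neighborFinset v := (SimpleGraph.mem_neighborFinset G v u).2 hadj
      have := Finset.card_pos.2 ⟨u, this⟩
      rw [show (G.neighborFinset v).card = G.degree v from rfl, hd0] at this
      omega
    set y : Fin n → ℝ := fun i => if i = v then (n:ℝ)-1 else -1 with hy
    have hsumy : ∑ i, y i = 0 := by
      have hyi : ∀ i, y i = (if i = v then (n:ℝ) else 0) - 1 := by
        intro i
        by_cases h : i = v <;> simp [hy, h]
      simp_rw [hyi, Finset.sum_sub_distrib, Finset.sum_ite_eq' Finset.univ v,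
        Finset.sum_const, Finset.card_univ, Fintype.card_fin, Finset.mem_univ, if_pos,
        nsmul_eq_mul, mul_one, sub_self]
    have h1 := rayleigh_lower hn0 (G.lapMatrix ℝ) hL hker j0 hj0 (μ iM) hμ2 hlb
      ((WithLp.equiv 2 (Fin n → ℝ)).symm y) hsumy
    have h2 : μ iM * ∑ i, (y i)^2 ≤ y ⬝ᵥ (G.lapMatrix ℝ *ᵥ y) := h1
    rw [mulVec_isolated G v hiso, dotProduct_zero] at h2
    have h3 : ((n:ℝ)-1)^2 ≤ ∑ i, (y i)^2 := by
      have := Finset.single_le_sum (f := fun i => (y i)^2) (fun i _ => sq_nonneg (y i))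
        (Finset.mem_univ v)
      simpa [hy] using this
    have hn1 : (1:ℝ) ≤ (n:ℝ) - 1 := by
      have : (2:ℝ) ≤ (n:ℝ) := by exact_mod_cast hn
      linarith
    have h4 : (1:ℝ) ≤ ∑ i, (y i)^2 := le_trans (by nlinarith) h3
    have h5 := mul_le_mul_of_nonneg_left h4 hμ2.le
    simp only [mul_one] at h5
    linarith
  -- all neighbors of vertices of I lie in S
  have hA : ∀ v ∈ I, ∀ u, G.Adj v u → u ∈ S := by
    intro v hv u hadj
    by_contra hu
    rw [hIdef] at hv
    exact (Finset.mem_filter.1 hv).2.2 u hu hadj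
  have hvnotS : ∀ v ∈ I, v ∉ S := by
    intro v hv
    rw [hIdef] at hv
    exact (Finset.mem_filter.1 hv).2.1
  -- S is nonempty
  have hs1 : 1 ≤ S.card := by
    by_contra hs
    have hS0 : S = ∅ := Finset.card_eq_zero.1 (by omega)
    have hi1 : 1 ≤ I.card := by
      have h := hcon
      rw [hS0, Finset.card_empty, Nat.mul_zero] at h
      omega
    obtain ⟨v, hv⟩ := Finset.card_pos.1 hi1
    obtain ⟨u, hu⟩ := Finset.card_pos.1 (hdeg v hv)
    have : u ∈ S := hA v hv u ((SimpleGraph.mem_neighborFinset G v u).1 hu)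
    rw [hS0] at this
    exact absurd this (Finset.notMem_empty u)
  have h5s : 5 * S.card ≤ (2*k+1) * S.card := Nat.mul_le_mul_right _ (by omega)
  have hi3 : 3 ≤ I.card := by omega
  -- the two vertices of smallest degree in I
  obtain ⟨u, huI, humin⟩ := Finset.exists_min_image I (fun z => G.degree z)
    (Finset.card_pos.1 (by omega))
  have herase : (I.erase u).Nonempty :=
    Finset.card_pos.1 (by rw [Finset.card_erase_of_mem huI]; omega)
  obtain ⟨v, hvE, hvmin⟩ := Finset.exists_min_image (I.erase u) (fun z => G.degree z) herase
  have hvI : v ∈ I := Finset.mem_of_mem_erase hvE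
  have huv : u ≠ v := fun h => (Finset.ne_of_mem_erase hvE) h.symm
  -- lower bound on the total degree of I
  have hm1 : G.degree u + (I.card - 1) * G.degree v ≤ ∑ z ∈ I, G.degree z := by
    rw [← Finset.add_sum_erase I _ huI]
    apply Nat.add_le_add_left
    calc (I.card - 1) * G.degree v = (I.erase u).card * G.degree v := by
          rw [Finset.card_erase_of_mem huI]
      _ ≤ ∑ z ∈ I.erase u, G.degree z := by
          have := Finset.card_nsmul_le_sum (I.erase u) (fun z => G.degree z) (G.degree v)
            (fun z hz => hvmin z hz)
          simpa [smul_eq_mul] using this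
  -- double counting of the edges between I and S
  have hdc : ∑ z ∈ I, G.degree z = ∑ w' ∈ S, (I.filter (fun z => G.Adj w' z)).card := by
    have h1 : ∀ z ∈ I, G.degree z = ∑ w' ∈ S, if G.Adj z w' then 1 else 0 := by
      intro z hz
      have hdz : (G.degree z : ℕ) = ∑ j, if G.Adj z j then 1 else 0 :=
        SimpleGraph.degree_eq_sum_if_adj G z
      rw [hdz]
      symm
      apply Finset.sum_subset (Finset.subset_univ S)
      intro w' _ hw'
      rw [if_neg]
      intro hadj
      exact hw' (hA z hz w' hadj)
    rw [Finset.sum_congr rfl h1, Finset.sum_comm]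
    apply Finset.sum_congr rfl
    intro w' _
    rw [Finset.card_filter]
    apply Finset.sum_congr rfl
    intro z _
    rw [if_congr (G.adj_comm z w') rfl rfl]
  -- a vertex of S with the maximum number of neighbors in I
  obtain ⟨w, hwS, hwmax⟩ := Finset.exists_max_image S
    (fun w' => (I.filter (fun z => G.Adj w' z)).card) (Finset.card_pos.1 hs1)
  have hst : ∑ w' ∈ S, (I.filter (fun z => G.Adj w' z)).card
      ≤ S.card * (I.filter (fun z => G.Adj w z)).card := by
    calc ∑ w' ∈ S, (I.filter (fun z => G.Adj w' z)).card
        ≤ ∑ _w' ∈ S, (I.filter (fun z => G.Adj w z)).card :=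
          Finset.sum_le_sum (fun w' hw' => hwmax w' hw')
      _ = S.card * (I.filter (fun z => G.Adj w z)).card := by
          rw [Finset.sum_const, smul_eq_mul]
  have hT : G.degree u + (I.card - 1) * G.degree v
      ≤ S.card * (I.filter (fun z => G.Adj w z)).card :=
    le_trans hm1 (le_trans (le_of_eq hdc) hst)
  have htpos : 1 ≤ (I.filter (fun z => G.Adj w z)).card := by
    by_contra ht
    have ht0 : (I.filter (fun z => G.Adj w z)).card = 0 := by omega
    rw [ht0, Nat.mul_zero] at hT
    have := hdeg u huI
    omega
  -- star test vector: μ0 ≥ t + 1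
  have hwT : w ∉ I.filter (fun z => G.Adj w z) :=
    fun hw => (hvnotS w (Finset.mem_of_mem_filter w hw)) hwS
  have hadjT : ∀ z ∈ I.filter (fun z => G.Adj w z), G.Adj w z :=
    fun z hz => (Finset.mem_filter.1 hz).2
  have hQs := quadform_star G w (I.filter (fun z => G.Adj w z)) hwT hadjT
  have hNs := normsq_star w (I.filter (fun z => G.Adj w z)) hwT
  have hups : (fun i => if i = w then (((I.filter (fun z => G.Adj w z)).card):ℝ)
        else if i ∈ I.filter (fun z => G.Adj w z) then -1 else 0) ⬝ᵥ
      (G.lapMatrix ℝ *ᵥ (fun i => if i = w then (((I.filter (fun z => G.Adj w z)).card):ℝ)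
        else if i ∈ I.filter (fun z => G.Adj w z) then -1 else 0))
      ≤ μ i0 * ∑ i, ((fun i => if i = w then (((I.filter (fun z => G.Adj w z)).card):ℝ)
        else if i ∈ I.filter (fun z => G.Adj w z) then -1 else 0) i)^2 :=
    rayleigh_upper (G.lapMatrix ℝ) hL (μ i0) hub
      ((WithLp.equiv 2 (Fin n → ℝ)).symm (fun i => if i = w
        then (((I.filter (fun z => G.Adj w z)).card):ℝ)
        else if i ∈ I.filter (fun z => G.Adj w z) then -1 else 0))
  rw [hNs] at hups
  have htr1 : (1:ℝ) ≤ ((I.filter (fun z => G.Adj w z)).card : ℝ) := by exact_mod_cast htpos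
  have hμ0t : ((I.filter (fun z => G.Adj w z)).card : ℝ) + 1 ≤ μ i0 := by
    have hcomb := le_trans hQs hups
    nlinarith [hcomb, htr1]
  -- pair test vector: 2 μ2 ≤ d1 + d2
  have hnadj : ¬ G.Adj u v := fun hadj => (hvnotS v hvI) (hA u huI v hadj)
  have hlow : μ iM * ∑ i, ((fun i => if i = u then (1:ℝ) else if i = v then -1 else 0) i)^2
      ≤ (fun i => if i = u then (1:ℝ) else if i = v then -1 else 0) ⬝ᵥ
        (G.lapMatrix ℝ *ᵥ (fun i => if i = u then (1:ℝ) else if i = v then -1 else 0)) :=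
    rayleigh_lower hn0 (G.lapMatrix ℝ) hL hker j0 hj0 (μ iM) hμ2 hlb
      ((WithLp.equiv 2 (Fin n → ℝ)).symm
        (fun i => if i = u then (1:ℝ) else if i = v then -1 else 0))
      (sum_pair_vec u v huv)
  rw [normsq_pair u v huv, quadform_pair G u v huv, if_neg hnadj, add_zero] at hlow
  -- final contradiction by arithmetic
  have hkpos : (0:ℝ) ≤ 2*(k:ℝ)+1 := by positivity
  have hF1 : (G.degree u : ℝ) + ((I.card : ℝ) - 1) * (G.degree v : ℝ)
      ≤ (S.card : ℝ) * ((I.filter (fun z => G.Adj w z)).card : ℝ) := by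
    have h' : ((G.degree u + (I.card - 1) * G.degree v : ℕ) : ℝ)
        ≤ ((S.card * (I.filter (fun z => G.Adj w z)).card : ℕ) : ℝ) := Nat.cast_le.2 hT
    push_cast [Nat.cast_sub (show 1 ≤ I.card by omega)] at h'
    linarith
  have hF5 : (2*(k:ℝ)+1) * (S.card : ℝ) + 1 ≤ 2 * (I.card : ℝ) := by
    have : (2*k+1) * S.card + 1 ≤ 2 * I.card := hcon
    exact_mod_cast this
  have h6 : 2*(((I.filter (fun z => G.Adj w z)).card : ℝ) + 1) ≤ (2*(k:ℝ)+1) * μ iM := by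
    linarith [hμ0t, hcond']
  have h8 := mul_le_mul_of_nonneg_left hlow hkpos
  have h7 : 4*(((I.filter (fun z => G.Adj w z)).card : ℝ) + 1)
      ≤ (2*(k:ℝ)+1) * ((G.degree u : ℝ) + (G.degree v : ℝ)) := by nlinarith [h6, h8]
  have hdd0 : (0:ℝ) ≤ (G.degree u : ℝ) + (G.degree v : ℝ) := by positivity
  have h9 := mul_le_mul_of_nonneg_right hF5 hdd0
  have h10 := mul_le_mul_of_nonneg_right h7 (show (0:ℝ) ≤ (S.card:ℝ) by positivity)
  have hd1r : (1:ℝ) ≤ (G.degree u : ℝ) := by exact_mod_cast hdeg u huI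
  have hd12r : (G.degree u : ℝ) ≤ (G.degree v : ℝ) := by exact_mod_cast humin v hvI
  have hir3 : (3:ℝ) ≤ (I.card : ℝ) := by exact_mod_cast hi3
  have hsr1 : (1:ℝ) ≤ (S.card : ℝ) := by exact_mod_cast hs1
  have hprod : (0:ℝ) ≤ ((I.card : ℝ) - 3) * ((G.degree v : ℝ) - (G.degree u : ℝ)) :=
    mul_nonneg (by linarith) (by linarith)
  nlinarith [hF1, h9, h10, hprod, hd1r, hd12r, hir3, hsr1, htr1]
end

section
/- Let k and t be integers with k ≥ 2 and 1 ≤ t ≤ k−1, and let G be a t-connected finite simple graph of order n with 2kn ≥ (2k²+5k+1)t + k²+5k+2. If the number of edges of G satisfies |E(G)| > C(n − ⌊(2k+1)t/2⌋ − 1, 2) + t·(⌊(2k+1)t/2⌋ + 1), where C(m,2) = m(m−1)/2, then for every subset S ⊆ V(G), 2·i(G−S) ≤ (2k+1)·|S|. -/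
/-- `G` is `t`-connected: it has more than `t` vertices, and deleting any fewer than `t`
vertices leaves a connected graph. -/
def TConnected {V : Type*} [Fintype V] [DecidableEq V] (G : SimpleGraph V) (t : ℕ) : Prop :=
  t < Fintype.card V ∧
    ∀ S : Finset V, S.card < t → (G.induce {v : V | v ∉ S}).Connected

private lemma core_arith (k t s i n q : ℤ) (hk : 2 ≤ k) (ht1 : 1 ≤ t) (htk : t ≤ k - 1)
    (hts : t ≤ s) (hi1 : (2*k+1)*s + 1 ≤ 2*i) (hi2 : 2*i ≤ (2*k+1)*s + 2)
    (hin : i + s ≤ n) (hq1 : 2*q ≤ (2*k+1)*t) (hq2 : (2*k+1)*t ≤ 2*q + 1)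
    (hn : (2*k^2+5*k+1)*t + k^2+5*k+2 ≤ 2*k*n) :
    (n-i)*(n-i-1) + 2*i*s ≤ (n-q-1)*(n-q-2) + 2*t*(q+1) := by
  have hk0 : (0:ℤ) ≤ k := by linarith
  have ha : 2*i = (2*k+1)*s+1 ∨ 2*i = (2*k+1)*s+2 := by
    rcases le_or_gt (2*i) ((2*k+1)*s+1) with h|h
    · exact Or.inl (le_antisymm h hi1)
    · exact Or.inr (le_antisymm hi2 (by linarith))
  have he : 2*q+1 = (2*k+1)*t ∨ 2*q+1 = (2*k+1)*t+1 := by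
    rcases le_or_gt ((2*k+1)*t) (2*q) with h|h
    · exact Or.inr (by linarith)
    · exact Or.inl (by linarith)
  rcases ha with ha|ha <;> rcases he with he|he
  · -- (a,e) = (0,0)
    have hev : Even ((2*k+1)*(s-t)) := ⟨i-q-1, by linarith⟩
    rcases Int.even_mul.mp hev with h2|h2
    · obtain ⟨m, hm⟩ := h2; omega
    · obtain ⟨r, hr⟩ := h2
      have hs : s = t + 2*r := by linarith
      subst hs
      have hr0 : (0:ℤ) ≤ r := by linarith
      have hrr : (0:ℤ) ≤ r*(r-1) := by
        rcases le_or_gt 1 r with h|h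
        · exact mul_nonneg (by linarith) (by linarith)
        · have : r = 0 := by omega
          simp [this]
      have hC : (0:ℤ) ≤ n - i - (t+2*r) := by linarith
      have f1 : (0:ℤ) ≤ k*(r*(r-1)) := mul_nonneg hk0 hrr
      have f2 : (0:ℤ) ≤ k*(k*(r*(r-1))) := mul_nonneg hk0 f1
      have f3 : (0:ℤ) ≤ r*(k*(k-1-t)) := mul_nonneg hr0 (mul_nonneg hk0 (by linarith))
      have f4 : (0:ℤ) ≤ r*(k-t) := mul_nonneg hr0 (by linarith)
      have f5 : (0:ℤ) ≤ r*(k-2) := mul_nonneg hr0 (by linarith)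
      have f6 : (0:ℤ) ≤ k*(r*(n-i-(t+2*r))) := mul_nonneg hk0 (mul_nonneg hr0 hC)
      have f7 : (0:ℤ) ≤ r*(n-i-(t+2*r)) := mul_nonneg hr0 hC
      have hE : 4*((n-q-1)*(n-q-2)+2*t*(q+1)) - 4*((n-i)*(n-i-1)+2*i*(t+2*r)) =
          4*(2*k+1)^2*(r*(r-1)) + 2*r*(8*(k*(k-1-t)) + 4*(k-t) + 8*k - 4)
            + 16*(k*(r*(n-i-(t+2*r)))) + 8*(r*(n-i-(t+2*r))) := by
        linear_combination (5 + 2*q - 4*n + 5*t + 2*k*t)*he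
          + (-3 + 4*n - 2*i - 6*r - 5*t + 4*k*r - 2*k*t)*ha
      linarith [hE, hrr, f1, f2, f3, f4, f5, f6, f7, hr0]
  · -- (a,e) = (0,1)
    have hodd : Odd ((2*k+1)*(s-t)) := ⟨i-q-1, by linarith⟩
    obtain ⟨-, h3⟩ := Int.odd_mul.mp hodd
    obtain ⟨r, hr⟩ := h3
    have hs : s = t + 2*r + 1 := by linarith
    subst hs
    have hr0 : (0:ℤ) ≤ r := by linarith
    rcases le_or_gt 1 r with hr1|hr1
    · have hC : (0:ℤ) ≤ n - i - (t+2*r+1) := by linarith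
      have h31 : (0:ℤ) ≤ (2*r+1)*(r-1) := mul_nonneg (by linarith) (by linarith)
      have f1 : (0:ℤ) ≤ k*((2*r+1)*(r-1)) := mul_nonneg hk0 h31
      have f2 : (0:ℤ) ≤ k*(k*((2*r+1)*(r-1))) := mul_nonneg hk0 f1
      have f3 : (0:ℤ) ≤ (2*r+1)*(k*(k-1-t)) :=
        mul_nonneg (by linarith) (mul_nonneg hk0 (by linarith))
      have f4 : (0:ℤ) ≤ (2*r+1)*(k-1-t) := mul_nonneg (by linarith) (by linarith)
      have f5 : (0:ℤ) ≤ (2*r+1)*(k-2) := mul_nonneg (by linarith) (by linarith)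
      have f6 : (0:ℤ) ≤ (2*r+1)*((k-2)*(k+2)) :=
        mul_nonneg (by linarith) (mul_nonneg (by linarith) (by linarith))
      have f7 : (0:ℤ) ≤ k*(r*(n-i-(t+2*r+1))) := mul_nonneg hk0 (mul_nonneg hr0 hC)
      have f8 : (0:ℤ) ≤ k*(n-i-(t+2*r+1)) := mul_nonneg hk0 hC
      have f9 : (0:ℤ) ≤ r*(n-i-(t+2*r+1)) := mul_nonneg hr0 hC
      have hE : 4*((n-q-1)*(n-q-2)+2*t*(q+1)) - 4*((n-i)*(n-i-1)+2*i*(t+2*r+1)) =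
          3 + 2*(2*k+1)^2*((2*r+1)*(r-1))
            + (2*r+1)*(8*(k*(k-1-t)) + 4*(k-1-t) + 4*((k-2)*(k+2)) + 8*(k-2) + 27)
            + 16*(k*(r*(n-i-(t+2*r+1)))) + 8*(k*(n-i-(t+2*r+1))) + 8*(r*(n-i-(t+2*r+1))) := by
        linear_combination (6 + 2*q - 4*n + 5*t + 2*k*t)*he
          + (-8 + 4*n - 2*i - 6*r - 5*t + 2*k + 4*k*r - 2*k*t)*ha
      linarith [hE, h31, f1, f2, f3, f4, f5, f6, f7, f8, f9, hr1]
    · have hr00 : r = 0 := by omega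
      subst hr00
      have hE : 4*((n-q-1)*(n-q-2)+2*t*(q+1)) - 4*((n-i)*(n-i-1)+2*i*(t+2*0+1)) =
          4*(2*k*n - ((2*k^2+5*k+1)*t + k^2+5*k+2)) := by
        linear_combination (6 + 2*q - 4*n + 5*t + 2*k*t)*he
          + (-8 + 4*n - 2*i - 5*t - 2*k - 2*k*t)*ha
      linarith [hE, hn]
  · -- (a,e) = (1,0)
    have hodd : Odd ((2*k+1)*(s-t)) := ⟨i-q-2, by linarith⟩
    obtain ⟨-, h3⟩ := Int.odd_mul.mp hodd
    obtain ⟨r, hr⟩ := h3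
    have hs : s = t + 2*r + 1 := by linarith
    subst hs
    have hr0 : (0:ℤ) ≤ r := by linarith
    rcases le_or_gt 1 r with hr1|hr1
    · have hC : (0:ℤ) ≤ n - i - (t+2*r+1) := by linarith
      have h31 : (0:ℤ) ≤ (2*r+1)*(r-1) := mul_nonneg (by linarith) (by linarith)
      have f1 : (0:ℤ) ≤ k*((2*r+1)*(r-1)) := mul_nonneg hk0 h31
      have f2 : (0:ℤ) ≤ k*(k*((2*r+1)*(r-1))) := mul_nonneg hk0 f1
      have f3 : (0:ℤ) ≤ (2*r+1)*(k*(k-1-t)) :=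
        mul_nonneg (by linarith) (mul_nonneg hk0 (by linarith))
      have f4 : (0:ℤ) ≤ (2*r+1)*(k-1-t) := mul_nonneg (by linarith) (by linarith)
      have f5 : (0:ℤ) ≤ (2*r+1)*(k-2) := mul_nonneg (by linarith) (by linarith)
      have f6 : (0:ℤ) ≤ (2*r+1)*((k-2)*(k+2)) :=
        mul_nonneg (by linarith) (mul_nonneg (by linarith) (by linarith))
      have f7 : (0:ℤ) ≤ k*(r*(n-i-(t+2*r+1))) := mul_nonneg hk0 (mul_nonneg hr0 hC)
      have f8 : (0:ℤ) ≤ k*(n-i-(t+2*r+1)) := mul_nonneg hk0 hC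
      have f9 : (0:ℤ) ≤ r*(n-i-(t+2*r+1)) := mul_nonneg hr0 hC
      have hE : 4*((n-q-1)*(n-q-2)+2*t*(q+1)) - 4*((n-i)*(n-i-1)+2*i*(t+2*r+1)) =
          -1 + 2*(2*k+1)^2*((2*r+1)*(r-1))
            + (2*r+1)*(8*(k*(k-1-t)) + 4*(k-1-t) + 4*((k-2)*(k+2)) + 16*(k-2) + 51)
            + 16*(k*(r*(n-i-(t+2*r+1)))) + 8*(k*(n-i-(t+2*r+1))) + 8*(r*(n-i-(t+2*r+1)))
            + 8*(n-i-(t+2*r+1)) := by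
        linear_combination (5 + 2*q - 4*n + 5*t + 2*k*t)*he
          + (-5 + 4*n - 2*i - 6*r - 5*t + 2*k + 4*k*r - 2*k*t)*ha
      linarith [hE, h31, f1, f2, f3, f4, f5, f6, f7, f8, f9, hr1, hC]
    · have hr00 : r = 0 := by omega
      subst hr00
      have hC : (0:ℤ) ≤ n - i - (t+2*0+1) := by linarith
      have hE : 4*((n-q-1)*(n-q-2)+2*t*(q+1)) - 4*((n-i)*(n-i-1)+2*i*(t+2*0+1)) =
          4 + 4*k + 8*(n-i-(t+2*0+1)) + 4*(2*k*n - ((2*k^2+5*k+1)*t + k^2+5*k+2)) := by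
        linear_combination (5 + 2*q - 4*n + 5*t + 2*k*t)*he
          + (-5 + 4*n - 2*i - 5*t - 2*k - 2*k*t)*ha
      linarith [hE, hn, hC, hk]
  · -- (a,e) = (1,1)
    have hev : Even ((2*k+1)*(s-t)) := ⟨i-q-1, by linarith⟩
    rcases Int.even_mul.mp hev with h2|h2
    · obtain ⟨m, hm⟩ := h2; omega
    · obtain ⟨r, hr⟩ := h2
      have hs : s = t + 2*r := by linarith
      subst hs
      have hr0 : (0:ℤ) ≤ r := by linarith
      have hrr : (0:ℤ) ≤ r*(r-1) := by
        rcases le_or_gt 1 r with h|h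
        · exact mul_nonneg (by linarith) (by linarith)
        · have : r = 0 := by omega
          simp [this]
      have hC : (0:ℤ) ≤ n - i - (t+2*r) := by linarith
      have f1 : (0:ℤ) ≤ k*(r*(r-1)) := mul_nonneg hk0 hrr
      have f2 : (0:ℤ) ≤ k*(k*(r*(r-1))) := mul_nonneg hk0 f1
      have f3 : (0:ℤ) ≤ r*(k*(k-1-t)) := mul_nonneg hr0 (mul_nonneg hk0 (by linarith))
      have f4 : (0:ℤ) ≤ r*(k-t) := mul_nonneg hr0 (by linarith)
      have f5 : (0:ℤ) ≤ r*(k-2) := mul_nonneg hr0 (by linarith)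
      have f6 : (0:ℤ) ≤ k*(r*(n-i-(t+2*r))) := mul_nonneg hk0 (mul_nonneg hr0 hC)
      have f7 : (0:ℤ) ≤ r*(n-i-(t+2*r)) := mul_nonneg hr0 hC
      have hE : 4*((n-q-1)*(n-q-2)+2*t*(q+1)) - 4*((n-i)*(n-i-1)+2*i*(t+2*r)) =
          4*(2*k+1)^2*(r*(r-1)) + 2*r*(8*(k*(k-1-t)) + 4*(k-t) + 8*k - 8)
            + 16*(k*(r*(n-i-(t+2*r)))) + 8*(r*(n-i-(t+2*r))) := by
        linear_combination (6 + 2*q - 4*n + 5*t + 2*k*t)*he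
          + (-4 + 4*n - 2*i - 6*r - 5*t + 4*k*r - 2*k*t)*ha
      linarith [hE, hrr, f1, f2, f3, f4, f5, f6, f7, hr0]

private lemma main_arith (k t s i n q : ℤ) (hk : 2 ≤ k) (ht1 : 1 ≤ t) (htk : t ≤ k - 1)
    (hts : t ≤ s) (hi1 : (2*k+1)*s + 1 ≤ 2*i) (hin : i + s ≤ n)
    (hq1 : 2*q ≤ (2*k+1)*t) (hq2 : (2*k+1)*t ≤ 2*q + 1)
    (hn : (2*k^2+5*k+1)*t + k^2+5*k+2 ≤ 2*k*n) :
    (n-i)*(n-i-1) + 2*i*s ≤ (n-q-1)*(n-q-2) + 2*t*(q+1) := by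
  have step : ∀ j : ℤ, (2*k+1)*s + 1 ≤ 2*j → 2*j ≤ (2*k+1)*s + 2 → j ≤ i →
      (n-i)*(n-i-1) + 2*i*s ≤ (n-q-1)*(n-q-2) + 2*t*(q+1) := by
    intro j h1 h2 hle
    have hmono : (n-i)*(n-i-1) + 2*i*s ≤ (n-j)*(n-j-1) + 2*j*s := by
      rcases eq_or_lt_of_le hle with h|h
      · rw [h]
      · nlinarith [mul_nonneg (by linarith : (0:ℤ) ≤ i - j)
          (by linarith : (0:ℤ) ≤ 2*n - i - j - 1 - 2*s)]
    exact le_trans hmono (core_arith k t s j n q hk ht1 htk hts h1 h2 (by linarith) hq1 hq2 hn)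
  rcases Int.even_or_odd ((2*k+1)*s) with ⟨m,hm⟩|⟨m,hm⟩
  · refine step (m+1) (by linarith) (by linarith) ?_
    have h' : 2*m + 1 ≤ 2*i := by linarith
    omega
  · exact step (m+1) (by linarith) (by linarith) (by linarith)

open Finset in
private lemma edge_bound {V : Type*} [Fintype V] [DecidableEq V] (G : SimpleGraph V)
    [DecidableRel G.Adj] (S : Finset V) :
    2 * G.edgeFinset.card ≤
      (Fintype.card V - isoCount G S) * (Fintype.card V - isoCount G S - 1)
        + 2 * (isoCount G S * S.card) := by
  classical
  set I : Finset V := Finset.univ.filter (fun v => v ∉ S ∧ ∀ w, w ∉ S → ¬ G.Adj v w) with hI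
  have hiso : isoCount G S = I.card := rfl
  set U : Finset (V × V) := (Iᶜ.offDiag ∪ I ×ˢ S) ∪ S ×ˢ I with hU
  have hdart : Fintype.card G.Dart = 2 * G.edgeFinset.card :=
    SimpleGraph.dart_card_eq_twice_card_edges G
  have hmaps : ∀ d : G.Dart, d ∈ (Finset.univ : Finset G.Dart) → d.toProd ∈ U := by
    intro d _
    have hadj : G.Adj d.toProd.1 d.toProd.2 := d.adj
    by_cases h1 : d.toProd.1 ∈ I
    · have h1' := (Finset.mem_filter.mp h1).2
      have h2 : d.toProd.2 ∈ S := by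
        by_contra h2
        exact h1'.2 _ h2 hadj
      exact Finset.mem_union_left _ (Finset.mem_union_right _
        (Finset.mem_product.mpr ⟨h1, h2⟩))
    · by_cases h2 : d.toProd.2 ∈ I
      · have h2' := (Finset.mem_filter.mp h2).2
        have h1'' : d.toProd.1 ∈ S := by
          by_contra h1''
          exact h2'.2 _ h1'' hadj.symm
        exact Finset.mem_union_right _ (Finset.mem_product.mpr ⟨h1'', h2⟩)
      · refine Finset.mem_union_left _ (Finset.mem_union_left _ ?_)
        exact Finset.mem_offDiag.mpr ⟨Finset.mem_compl.mpr h1, Finset.mem_compl.mpr h2, hadj.ne⟩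
  have hinj : Set.InjOn (fun d : G.Dart => d.toProd) (Finset.univ : Finset G.Dart) := by
    intro a _ b _ hab
    exact SimpleGraph.Dart.toProd_injective hab
  have hcard : Fintype.card G.Dart ≤ U.card := by
    rw [← Finset.card_univ]
    exact Finset.card_le_card_of_injOn _ hmaps hinj
  have hUcard : U.card ≤ (Iᶜ.card * Iᶜ.card - Iᶜ.card) + I.card * S.card + S.card * I.card := by
    calc U.card ≤ (Iᶜ.offDiag ∪ I ×ˢ S).card + (S ×ˢ I).card := Finset.card_union_le _ _
    _ ≤ Iᶜ.offDiag.card + (I ×ˢ S).card + (S ×ˢ I).card := by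
        have := Finset.card_union_le Iᶜ.offDiag (I ×ˢ S)
        omega
    _ = (Iᶜ.card * Iᶜ.card - Iᶜ.card) + I.card * S.card + S.card * I.card := by
        rw [Finset.offDiag_card, Finset.card_product, Finset.card_product]
  have hIc : Iᶜ.card = Fintype.card V - I.card := Finset.card_compl I
  have hIle : I.card ≤ Fintype.card V := Finset.card_le_univ I
  rw [hiso]
  have h2 : 2 * G.edgeFinset.card ≤ (Fintype.card V - I.card) * (Fintype.card V - I.card)
      - (Fintype.card V - I.card) + I.card * S.card + S.card * I.card := by
    rw [← hdart]
    calc Fintype.card G.Dart ≤ U.card := hcard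
    _ ≤ _ := by rw [hIc] at hUcard; exact hUcard
  have hm : (Fintype.card V - I.card) * (Fintype.card V - I.card) - (Fintype.card V - I.card)
      = (Fintype.card V - I.card) * (Fintype.card V - I.card - 1) := by
    cases' Nat.eq_zero_or_pos (Fintype.card V - I.card) with h h
    · simp [h]
    · rw [Nat.mul_sub_one]
  rw [hm, Nat.mul_comm S.card I.card] at h2
  omega

private lemma iso_zero {V : Type*} [Fintype V] [DecidableEq V] (G : SimpleGraph V)
    [DecidableRel G.Adj] (S : Finset V)
    (hconn : (G.induce {v : V | v ∉ S}).Connected)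
    (hcard : S.card + 2 ≤ Fintype.card V) :
    isoCount G S = 0 := by
  classical
  rw [isoCount, Finset.card_eq_zero]
  by_contra h
  obtain ⟨v, hv⟩ := Finset.nonempty_iff_ne_empty.mpr h
  obtain ⟨hvS, hviso⟩ := (Finset.mem_filter.mp hv).2
  have hcompl : 1 < Sᶜ.card := by
    rw [Finset.card_compl]
    omega
  obtain ⟨w, hwS, hwv⟩ := Finset.exists_mem_ne hcompl v
  have hvmem : v ∈ {x : V | x ∉ S} := hvS
  have hwmem : w ∈ {x : V | x ∉ S} := Finset.mem_compl.mp hwS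
  obtain ⟨p⟩ := hconn.preconnected ⟨v, hvmem⟩ ⟨w, hwmem⟩
  cases p with
  | nil => exact hwv rfl
  | @cons _ b _ hadj p' =>
    exact hviso b.1 b.2 hadj

private lemma final_contra (k t s i n q E : ℕ) (hk : 2 ≤ k) (ht1 : 1 ≤ t)
    (htk' : t + 1 ≤ k) (hts : t ≤ s) (hi1 : (2*k+1)*s + 1 ≤ 2*i) (hin : i + s ≤ n)
    (hq : q = ((2*k+1)*t)/2)
    (hn : (2*k^2+5*k+1)*t + k^2+5*k+2 ≤ 2*k*n)
    (hedge : 2*E ≤ (n-i)*(n-i-1) + 2*(i*s))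
    (hsize : (n-q-1).choose 2 + t*(q+1) < E) : False := by
  have hq12 : 2*q ≤ (2*k+1)*t ∧ (2*k+1)*t ≤ 2*q + 1 := by
    constructor <;> omega
  have hkZ : (2:ℤ) ≤ (k:ℤ) := by exact_mod_cast hk
  have ht1Z : (1:ℤ) ≤ (t:ℤ) := by exact_mod_cast ht1
  have htkZ : (t:ℤ) ≤ (k:ℤ) - 1 := by
    have := (Nat.cast_le (α := ℤ)).mpr htk'
    push_cast at this
    linarith
  have hnZ : (2*(k:ℤ)^2+5*k+1)*t + (k:ℤ)^2+5*k+2 ≤ 2*k*(n:ℤ) := by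
    exact_mod_cast hn
  have hq1Z : 2*(q:ℤ) ≤ (2*(k:ℤ)+1)*t := by exact_mod_cast hq12.1
  have hq2Z : (2*(k:ℤ)+1)*t ≤ 2*(q:ℤ) + 1 := by exact_mod_cast hq12.2
  have htsZ : (t:ℤ) ≤ (s:ℤ) := by exact_mod_cast hts
  have hi1Z : (2*(k:ℤ)+1)*s + 1 ≤ 2*(i:ℤ) := by exact_mod_cast hi1
  have hinZ : (i:ℤ) + s ≤ (n:ℤ) := by exact_mod_cast hin
  have key := main_arith k t s i n q hkZ ht1Z htkZ htsZ hi1Z hinZ hq1Z hq2Z hnZ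
  have hqn : (q:ℤ) + 2 ≤ (n:ℤ) := by
    nlinarith [mul_le_mul_of_nonneg_left hq1Z (by linarith : (0:ℤ) ≤ (k:ℤ))]
  have hqnN : q + 2 ≤ n := by exact_mod_cast hqn
  have hchoose : 2 * Nat.choose (n - q - 1) 2 = (n - q - 1) * (n - q - 2) := by
    have heven : 2 ∣ (n - q - 1) * (n - q - 1 - 1) := (Nat.even_mul_pred_self _).two_dvd
    have e1 : n - q - 1 - 1 = n - q - 2 := by omega
    rw [Nat.choose_two_right, Nat.mul_div_cancel' heven, e1]
  have hedgeZ : 2 * (E : ℤ) ≤ ((n:ℤ) - i) * ((n:ℤ) - i - 1) + 2*(i:ℤ)*(s:ℤ) := by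
    have hc1 : ((n - i : ℕ) : ℤ) = (n:ℤ) - i := by omega
    have hc2 : ((n - i - 1 : ℕ) : ℤ) = (n:ℤ) - i - 1 := by omega
    have h := (Nat.cast_le (α := ℤ)).mpr hedge
    push_cast at h
    rw [hc1, hc2] at h
    linarith
  have hsizeZ : ((n:ℤ)-q-1)*((n:ℤ)-q-2) + 2*(t:ℤ)*((q:ℤ)+1) < 2*(E:ℤ) := by
    have h2 : 2*((n - q - 1).choose 2) + 2*(t * (q + 1)) < 2*E := by omega
    rw [hchoose] at h2
    have hc3 : ((n - q - 1 : ℕ) : ℤ) = (n:ℤ) - q - 1 := by omega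
    have hc4 : ((n - q - 2 : ℕ) : ℤ) = (n:ℤ) - q - 2 := by omega
    have h3 := (Nat.cast_lt (α := ℤ)).mpr h2
    push_cast at h3
    rw [hc3, hc4] at h3
    linarith
  linarith [key, hedgeZ, hsizeZ]

/-- **Theorem 1.3.** Let `k ≥ 2`, `1 ≤ t ≤ k−1`, and let `G` be a `t`-connected graph of
order `n` with `2kn ≥ (2k²+5k+1)t + k²+5k+2`.  If
`|E(G)| > C(n − ⌊(2k+1)t/2⌋ − 1, 2) + t·(⌊(2k+1)t/2⌋ + 1)`, then for every `S ⊆ V(G)` we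
have `2·i(G−S) ≤ (2k+1)·|S|`. -/
theorem stmt1 {V : Type*} [Fintype V] [DecidableEq V] (G : SimpleGraph V)
    [DecidableRel G.Adj] (k t : ℕ) (hk : 2 ≤ k) (ht1 : 1 ≤ t) (htk : t ≤ k - 1)
    (hconn : TConnected G t)
    (hn : (2 * k ^ 2 + 5 * k + 1) * t + k ^ 2 + 5 * k + 2 ≤ 2 * k * Fintype.card V)
    (hsize : Nat.choose (Fintype.card V - ((2 * k + 1) * t) / 2 - 1) 2
        + t * (((2 * k + 1) * t) / 2 + 1) < G.edgeFinset.card) :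
    ∀ S : Finset V, 2 * isoCount G S ≤ (2 * k + 1) * S.card := by
  classical
  intro S
  by_contra hcon
  push_neg at hcon
  have hnk : k + 1 ≤ Fintype.card V := by nlinarith [hn, ht1, hk]
  rcases lt_or_ge S.card t with hst | hst
  · have hcard : S.card + 2 ≤ Fintype.card V := by omega
    have hzero := iso_zero G S (hconn.2 S hst) hcard
    rw [hzero] at hcon
    omega
  · have hsub : (Finset.univ.filter (fun v => v ∉ S ∧ ∀ w, w ∉ S → ¬ G.Adj v w)) ⊆ Sᶜ := by
      intro v hv
      exact Finset.mem_compl.mpr (Finset.mem_filter.mp hv).2.1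
    have hin : isoCount G S + S.card ≤ Fintype.card V := by
      have h1 : isoCount G S ≤ Sᶜ.card := Finset.card_le_card hsub
      rw [Finset.card_compl] at h1
      have h2 : S.card ≤ Fintype.card V := Finset.card_le_univ S
      omega
    exact final_contra k t S.card (isoCount G S) (Fintype.card V) (((2*k+1)*t)/2)
      G.edgeFinset.card hk ht1 (by omega) hst (by omega) hin rfl hn (edge_bound G S) hsize
end

section
/- Let k ≥ 2 be an integer and let G be a finite simple graph of order n with minimum degree δ ≥ 1. Suppose that for every independent set {x_1, x_2, …, x_m} of G of size m = ⌊(2k+1)δ/2⌋ + 1, one has (2k+3)·max{d_G(x_1), d_G(x_2), …, d_G(x_m)} ≥ 2n. Then for every subset S ⊆ V(G), 2·i(G−S) ≤ (2k+1)·|S|. -/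
/-- **Theorem 1.4.** Let `k ≥ 2` and let `G` be a graph of order `n` with minimum degree
`δ ≥ 1`.  If every independent set `A` of `G` of size `⌊(2k+1)δ/2⌋ + 1` contains a vertex
`x` with `(2k+3)·d_G(x) ≥ 2n`, then for every `S ⊆ V(G)` we have
`2·i(G−S) ≤ (2k+1)·|S|`. -/
theorem stmt2 {V : Type*} [Fintype V] [DecidableEq V] [Nonempty V] (G : SimpleGraph V)
    [DecidableRel G.Adj] (k : ℕ) (hk : 2 ≤ k) (hδ : 1 ≤ G.minDegree)
    (hdeg : ∀ A : Finset V,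
      A.card = ((2 * k + 1) * G.minDegree) / 2 + 1 →
      (∀ x ∈ A, ∀ y ∈ A, x ≠ y → ¬ G.Adj x y) →
      ∃ x ∈ A, 2 * Fintype.card V ≤ (2 * k + 3) * G.degree x) :
    ∀ S : Finset V, 2 * isoCount G S ≤ (2 * k + 1) * S.card := by
  intro S
  set I : Finset V :=
    Finset.univ.filter (fun v => v ∉ S ∧ ∀ w, w ∉ S → ¬ G.Adj v w) with hI
  have hmemI : ∀ v, v ∈ I ↔ v ∉ S ∧ ∀ w, w ∉ S → ¬ G.Adj v w := by
    intro v; simp [hI]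
  have hiso : isoCount G S = I.card := rfl
  -- every isolated vertex has all neighbors in S, so degree ≤ |S|
  have hdegS : ∀ v ∈ I, G.degree v ≤ S.card := by
    intro v hv
    have hsub : G.neighborFinset v ⊆ S := by
      intro w hw
      rw [SimpleGraph.mem_neighborFinset] at hw
      by_contra hwS
      exact ((hmemI v).1 hv).2 w hwS hw
    simpa [SimpleGraph.card_neighborFinset_eq_degree] using Finset.card_le_card hsub
  rw [hiso]
  rcases Nat.eq_zero_or_pos I.card with h0 | hpos
  · simp [h0]
  · -- S has at least δ elements
    obtain ⟨v, hv⟩ := Finset.card_pos.mp hpos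
    have hδS : G.minDegree ≤ S.card :=
      le_trans (G.minDegree_le_degree v) (hdegS v hv)
    set m : ℕ := ((2 * k + 1) * G.minDegree) / 2 + 1 with hm
    by_cases hcase : I.card < m
    · -- small case: 2i ≤ (2k+1)δ ≤ (2k+1)|S|
      have h1 : I.card ≤ ((2 * k + 1) * G.minDegree) / 2 := by omega
      have h3 : (2 * k + 1) * G.minDegree ≤ (2 * k + 1) * S.card :=
        Nat.mul_le_mul_left _ hδS
      omega
    · push_neg at hcase
      obtain ⟨A, hAI, hAcard⟩ := Finset.exists_subset_card_eq hcase
      have hindep : ∀ x ∈ A, ∀ y ∈ A, x ≠ y → ¬ G.Adj x y := by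
        intro x hx y hy _ hadj
        exact ((hmemI x).1 (hAI hx)).2 y ((hmemI y).1 (hAI hy)).1 hadj
      obtain ⟨x, hxA, hx⟩ := hdeg A hAcard hindep
      have hxS : G.degree x ≤ S.card := hdegS x (hAI hxA)
      -- |S| + |I| ≤ n
      have hdisj : Disjoint S I := by
        rw [Finset.disjoint_left]
        intro a haS haI
        exact ((hmemI a).1 haI).1 haS
      have hcard : S.card + I.card ≤ Fintype.card V := by
        have := Finset.card_le_univ (S ∪ I)
        rwa [Finset.card_union_of_disjoint hdisj] at this
      have h2n : 2 * Fintype.card V ≤ (2 * k + 3) * S.card :=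
        le_trans hx (Nat.mul_le_mul_left _ hxS)
      have hsplit : (2 * k + 3) * S.card = (2 * k + 1) * S.card + 2 * S.card := by ring
      omega
end

section
/- Let k ≥ 2 be an integer and let G be a finite simple graph with minimum degree δ(G) and independence number α(G). If (2k+1)·δ(G) ≥ 2·α(G), then for every subset S ⊆ V(G), 2·i(G−S) ≤ (2k+1)·|S|. -/
/-- The independence number of `G`: the maximum size of a set of pairwise
nonadjacent vertices. -/
def indepNum {V : Type*} [Fintype V] [DecidableEq V] (G : SimpleGraph V)
    [DecidableRel G.Adj] : ℕ :=
  (Finset.univ.filter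
    (fun A : Finset V => ∀ x ∈ A, ∀ y ∈ A, x ≠ y → ¬ G.Adj x y)).sup Finset.card

/-- **Theorem 1.5.** Let `k ≥ 2` and let `G` be a graph.  If
`(2k+1)·δ(G) ≥ 2·α(G)`, then for every `S ⊆ V(G)` we have
`2·i(G−S) ≤ (2k+1)·|S|`. -/
theorem stmt3 {V : Type*} [Fintype V] [DecidableEq V] [Nonempty V] (G : SimpleGraph V)
    [DecidableRel G.Adj] (k : ℕ) (hk : 2 ≤ k)
    (hcond : 2 * indepNum G ≤ (2 * k + 1) * G.minDegree) :
    ∀ S : Finset V, 2 * isoCount G S ≤ (2 * k + 1) * S.card := by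
  intro S
  set I := Finset.univ.filter (fun v => v ∉ S ∧ ∀ w, w ∉ S → ¬ G.Adj v w) with hI
  rcases Nat.eq_zero_or_pos I.card with h0 | hpos
  · have : isoCount G S = 0 := h0
    omega
  · obtain ⟨v, hv⟩ := Finset.card_pos.mp hpos
    rw [hI, Finset.mem_filter] at hv
    have hindep : I.card ≤ indepNum G := by
      apply Finset.le_sup
      simp only [Finset.mem_filter, Finset.mem_univ, true_and]
      intro x hx y hy hxy hadj
      rw [hI, Finset.mem_filter] at hx hy
      exact hx.2.2 y hy.2.1 hadj
    have hdeg : G.minDegree ≤ S.card := by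
      have h1 : G.minDegree ≤ G.degree v := G.minDegree_le_degree v
      have h2 : G.degree v ≤ S.card := by
        rw [← SimpleGraph.card_neighborFinset_eq_degree]
        apply Finset.card_le_card
        intro w hw
        rw [SimpleGraph.mem_neighborFinset] at hw
        by_contra hws
        exact hv.2.2 w hws hw
      omega
    have hiso : isoCount G S = I.card := rfl
    have h3 : (2 * k + 1) * G.minDegree ≤ (2 * k + 1) * S.card :=
      Nat.mul_le_mul_left _ hdeg
    omega
end

section
/- Let G be a finite simple graph with n vertices and at least one edge, with Laplacian eigenvalues μ_1 ≥ μ_2 ≥ … ≥ μ_n = 0. Let S ⊆ V(G), and let X and Y be disjoint nonempty vertex subsets with X ∪ Y = V(G)∖S such that no edge of G joins a vertex of X to a vertex of Y and |X| ≤ |Y|. Then 2·μ_1·|X| ≤ (μ_1 − μ_{n-1})·n. -/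
open Matrix in
lemma spec_identity {n : ℕ} (A : Matrix (Fin n) (Fin n) ℝ) (hA : A.IsHermitian)
    (w : Fin n → ℝ) :
    w ⬝ᵥ (A *ᵥ w) =
      ∑ i, hA.eigenvalues i * ((star (hA.eigenvectorUnitary : Matrix (Fin n) (Fin n) ℝ) *ᵥ w) i)^2
    ∧ w ⬝ᵥ w = ∑ i, ((star (hA.eigenvectorUnitary : Matrix (Fin n) (Fin n) ℝ) *ᵥ w) i)^2 := by
  set U : Matrix (Fin n) (Fin n) ℝ := (hA.eigenvectorUnitary : Matrix (Fin n) (Fin n) ℝ) with hU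
  set z : Fin n → ℝ := star U *ᵥ w with hz
  have hsU : star U = Uᵀ := by
    rw [star_eq_conjTranspose, conjTranspose_eq_transpose_of_trivial]
  have hwU : w ᵥ* U = z := by
    rw [hz, hsU, mulVec_transpose]
  constructor
  · conv_lhs => rw [hA.spectral_theorem, Unitary.conjStarAlgAut_apply]
    rw [← mulVec_mulVec, ← mulVec_mulVec, dotProduct_mulVec, hwU]
    simp only [mulVec_diagonal, dotProduct, Function.comp_apply, RCLike.ofReal_real_eq_id, id_eq]
    exact Finset.sum_congr rfl fun i _ => by ring
  · have h1 : U * star U = 1 := by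
      exact (Matrix.mem_unitaryGroup_iff).mp hA.eigenvectorUnitary.2
    conv_lhs => rw [show w ⬝ᵥ w = w ⬝ᵥ ((U * star U) *ᵥ w) by rw [h1, one_mulVec]]
    rw [← mulVec_mulVec, dotProduct_mulVec, hwU]
    simp only [dotProduct]
    exact Finset.sum_congr rfl fun i _ => by ring

open Matrix in
lemma rayleigh_bounds {n : ℕ} (hn : 2 ≤ n) (G : SimpleGraph (Fin n)) [DecidableRel G.Adj]
    (μ : Fin n → ℝ) (hmono : Antitone μ)
    (e : Fin n ≃ Fin n)
    (he : ∀ i, (SimpleGraph.posSemidef_lapMatrix ℝ G).isHermitian.eigenvalues i = μ (e i))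
    (hlast : μ ⟨n - 1, Nat.sub_lt (lt_of_lt_of_le two_pos hn) Nat.one_pos⟩ = 0)
    (w : Fin n → ℝ) (hw : ∑ i, w i = 0) :
    μ ⟨n - 2, Nat.sub_lt (lt_of_lt_of_le two_pos hn) two_pos⟩ * (w ⬝ᵥ w) ≤ w ⬝ᵥ (G.lapMatrix ℝ *ᵥ w) ∧
      w ⬝ᵥ (G.lapMatrix ℝ *ᵥ w) ≤ μ ⟨0, lt_of_lt_of_le two_pos hn⟩ * (w ⬝ᵥ w) := by
  have hA := (SimpleGraph.posSemidef_lapMatrix ℝ G).isHermitian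
  obtain ⟨hq, hnorm⟩ := spec_identity (G.lapMatrix ℝ) hA w
  set U : Matrix (Fin n) (Fin n) ℝ := (hA.eigenvectorUnitary : Matrix (Fin n) (Fin n) ℝ) with hU
  set z : Fin n → ℝ := star U *ᵥ w with hz
  constructor
  · -- lower bound
    by_cases ha : μ ⟨n - 2, by omega⟩ ≤ 0
    · have h1 : (0:ℝ) ≤ w ⬝ᵥ (G.lapMatrix ℝ *ᵥ w) := by
        simpa using (SimpleGraph.posSemidef_lapMatrix ℝ G).dotProduct_mulVec_nonneg w
      have h2 : (0:ℝ) ≤ w ⬝ᵥ w := by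
        rw [hnorm]; positivity
      nlinarith
    · push_neg at ha
      rw [hq, hnorm, Finset.mul_sum]
      apply Finset.sum_le_sum
      intro i _
      by_cases hei : e i = ⟨n - 1, by omega⟩
      · -- eigenvalue 0; show z i = 0
        have hzi : z i = 0 := by
          -- eigenvector is constant
          set v : Fin n → ℝ := ⇑(hA.eigenvectorBasis i) with hv
          have hker : G.lapMatrix ℝ *ᵥ v = 0 := by
            rw [hA.mulVec_eigenvectorBasis i, he, hei, hlast, zero_smul]
          -- connectivity
          have hcard1 : Fintype.card {j // hA.eigenvalues j ≠ 0} = n - 1 := by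
            have hiff : ∀ j, hA.eigenvalues j ≠ 0 ↔ e j ≠ ⟨n - 1, by omega⟩ := by
              intro j
              constructor
              · intro h hj; exact h (by rw [he, hj, hlast])
              · intro h
                have hle : (e j : ℕ) ≤ n - 2 := by
                  have := (e j).isLt
                  have : (e j : ℕ) ≠ n - 1 := fun hc => h (Fin.ext hc)
                  omega
                have : μ ⟨n - 2, by omega⟩ ≤ μ (e j) := hmono (by simpa [Fin.le_def] using hle)
                rw [he]
                nlinarith
            rw [Fintype.card_congr (Equiv.subtypeEquivRight hiff)]
            rw [Fintype.card_subtype]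
            have hfe : (Finset.univ.filter fun x => e x ≠ ⟨n - 1, by omega⟩)
                = Finset.univ.erase (e.symm ⟨n - 1, by omega⟩) := by
              ext x
              simp [Finset.mem_filter, Finset.mem_erase, ← Equiv.eq_symm_apply, eq_comm]
              exact not_congr (eq_comm.trans (Equiv.eq_symm_apply e).symm)
            rw [hfe, Finset.card_erase_of_mem (Finset.mem_univ _), Finset.card_univ,
              Fintype.card_fin]
          have hrank : (G.lapMatrix ℝ).rank = n - 1 := by
            rw [hA.rank_eq_card_non_zero_eigs, hcard1]
          have hker_rank : Module.finrank ℝ (LinearMap.ker (Matrix.toLin' (G.lapMatrix ℝ))) = 1 := by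
            have htl : Matrix.toLin' (G.lapMatrix ℝ) = (G.lapMatrix ℝ).mulVecLin :=
              Matrix.toLin'_apply' _
            have := LinearMap.finrank_range_add_finrank_ker (Matrix.toLin' (G.lapMatrix ℝ))
            rw [htl] at this ⊢
            have hfr : Module.finrank ℝ (Fin n → ℝ) = n := by simp
            rw [hfr] at this
            have : (G.lapMatrix ℝ).rank + Module.finrank ℝ (LinearMap.ker (G.lapMatrix ℝ).mulVecLin) = n := by
              rw [Matrix.rank] at hrank ⊢; omega
            omega
          have hconn : Fintype.card G.ConnectedComponent = 1 := by
            rw [G.card_connectedComponent_eq_finrank_ker_toLin'_lapMatrix, hker_rank]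
          have hreach : ∀ a b : Fin n, G.Reachable a b := by
            intro a b
            have hsub := Fintype.card_le_one_iff.mp (le_of_eq hconn)
            exact SimpleGraph.ConnectedComponent.exact
              (hsub (G.connectedComponentMk a) (G.connectedComponentMk b))
          have hconst : ∀ a b : Fin n, v a = v b := by
            intro a b
            refine (SimpleGraph.lapMatrix_mulVec_eq_zero_iff_forall_reachable G).mp ?_ a b (hreach a b)
            exact hker
          -- z i = ∑ j, v j * w j = v 0 * ∑ w = 0
          have hzi' : z i = ∑ j, v j * w j := by
            simp only [hz, Matrix.mulVec, dotProduct]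
            refine Finset.sum_congr rfl fun j _ => ?_
            rw [Matrix.star_apply, star_trivial, hU, Matrix.IsHermitian.eigenvectorUnitary_apply]
          rw [hzi']
          calc ∑ j, v j * w j = ∑ j, v ⟨0, by omega⟩ * w j :=
                Finset.sum_congr rfl fun j _ => by rw [hconst j ⟨0, by omega⟩]
            _ = v ⟨0, by omega⟩ * ∑ j, w j := by rw [Finset.mul_sum]
            _ = 0 := by rw [hw, mul_zero]
        rw [hzi]
        simp [he, hei, hlast]
      · have hle : (e i : ℕ) ≤ n - 2 := by
          have := (e i).isLt
          have : (e i : ℕ) ≠ n - 1 := fun hc => hei (Fin.ext hc)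
          omega
        have h1 : μ ⟨n - 2, by omega⟩ ≤ μ (e i) := hmono (by simpa [Fin.le_def] using hle)
        rw [he]
        nlinarith [sq_nonneg (z i)]
  · rw [hq, hnorm, Finset.mul_sum]
    apply Finset.sum_le_sum
    intro i _
    rw [he]
    have h1 : μ (e i) ≤ μ ⟨0, by omega⟩ := hmono (by simp [Fin.le_def])
    nlinarith [sq_nonneg (z i)]

lemma arith_final (x y N m a : ℝ) (hx : 1 ≤ x) (hxy : x ≤ y) (hN : x + y ≤ N)
    (ha0 : 0 ≤ a) (ham : a ≤ m)
    (h : a * ((y/x)^2*(x - x^2/N) - 2*(y/x)*(-(x*y)/N) + (y - y^2/N)) ≤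
         m * ((y/x)^2*(x - x^2/N) + 2*(y/x)*(-(x*y)/N) + (y - y^2/N))) :
    2*m*x ≤ (m - a)*N := by
  have hx0 : (0:ℝ) < x := by linarith
  have hy0 : (0:ℝ) < y := by linarith
  have hN0 : (0:ℝ) < N := by linarith
  have hm0 : (0:ℝ) ≤ m := le_trans ha0 ham
  set R1 : ℝ := (y/x)^2*(x - x^2/N) + 2*(y/x)*(-(x*y)/N) + (y - y^2/N) with hR1
  set R2 : ℝ := (y/x)^2*(x - x^2/N) - 2*(y/x)*(-(x*y)/N) + (y - y^2/N) with hR2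
  have hpos : (0:ℝ) < N*x/y := by positivity
  have e1 : N*x/y * R1 = N*(x+y) - 4*x*y := by
    rw [hR1]; field_simp; ring
  have e2 : N*x/y * R2 = N*(x+y) := by
    rw [hR2]; field_simp; ring
  have h' := mul_le_mul_of_nonneg_left h hpos.le
  have key : a * (N*(x+y)) ≤ m * (N*(x+y) - 4*x*y) := by
    calc a * (N*(x+y)) = N*x/y * (a * R2) := by rw [← e2]; ring
      _ ≤ N*x/y * (m * R1) := h'
      _ = m * (N*x/y * R1) := by ring
      _ = m * (N*(x+y) - 4*x*y) := by rw [e1]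
  have k2 : 2*m*x*(x+y) ≤ 4*m*x*y := by
    nlinarith [mul_nonneg (mul_nonneg hm0 hx0.le) (sub_nonneg.mpr hxy)]
  have k3 : 2*m*x*(x+y) ≤ ((m - a)*N)*(x+y) := by nlinarith [key]
  have hxy0 : (0:ℝ) < x + y := by linarith
  exact le_of_mul_le_mul_right (by linarith [k3]) hxy0


open Matrix in
/-- **Lemma 2.1 (first inequality, Gu and Liu).** Let `G` be a graph with `n ≥ 2` vertices
and at least one edge, with Laplacian eigenvalues `μ 0 ≥ μ 1 ≥ … ≥ μ (n-1) = 0` (so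
`μ_1 = μ 0` and `μ_{n-1} = μ (n-2)` in the paper's notation).  Let `S ⊆ V(G)`, and let `X`
and `Y` be disjoint nonempty vertex subsets with `X ∪ Y = V(G) ∖ S`, no edge between `X`
and `Y`, and `|X| ≤ |Y|`.  Then `2·μ_1·|X| ≤ (μ_1 − μ_{n-1})·n`. -/
theorem stmt4 {n : ℕ} (hn : 2 ≤ n)
    (G : SimpleGraph (Fin n)) [DecidableRel G.Adj]
    (hedge : G.edgeSet.Nonempty)
    (μ : Fin n → ℝ) (hmono : Antitone μ)
    (hlist : ∃ e : Fin n ≃ Fin n,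
      ∀ i, (SimpleGraph.posSemidef_lapMatrix ℝ G).isHermitian.eigenvalues i = μ (e i))
    (hlast : μ ⟨n - 1, by omega⟩ = 0)
    (S X Y : Finset (Fin n))
    (hXY : Disjoint X Y) (hX : X.Nonempty) (hY : Y.Nonempty)
    (hunion : X ∪ Y = Sᶜ)
    (hnoedge : ∀ x ∈ X, ∀ y ∈ Y, ¬ G.Adj x y)
    (hcard : X.card ≤ Y.card) :
    2 * μ ⟨0, by omega⟩ * X.card ≤ (μ ⟨0, by omega⟩ - μ ⟨n - 2, by omega⟩) * n := by
  obtain ⟨e, he⟩ := hlist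
  set L : Matrix (Fin n) (Fin n) ℝ := G.lapMatrix ℝ with hLdef
  set N : ℝ := (n : ℝ) with hNdef
  set x : ℝ := (X.card : ℝ) with hxdef
  set y : ℝ := (Y.card : ℝ) with hydef
  set m : ℝ := μ ⟨0, by omega⟩ with hmdef
  set a : ℝ := μ ⟨n - 2, by omega⟩ with hadef
  have hN0 : (0:ℝ) < N := by rw [hNdef]; exact_mod_cast (by omega : 0 < n)
  have hx1 : (1:ℝ) ≤ x := by
    rw [hxdef]; exact_mod_cast hX.card_pos
  have hxy : x ≤ y := by rw [hxdef, hydef]; exact_mod_cast hcard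
  have hsum_le : x + y ≤ N := by
    have h1 : (X ∪ Y).card = X.card + Y.card := Finset.card_union_of_disjoint hXY
    have h2 : (X ∪ Y).card ≤ n := by
      simpa using Finset.card_le_univ (X ∪ Y)
    rw [hxdef, hydef, hNdef]; exact_mod_cast h1 ▸ h2
  have ha0 : 0 ≤ a := by
    rw [hadef, ← hlast]
    exact hmono (by simp [Fin.le_def]; omega)
  have ham : a ≤ m := by
    rw [hadef, hmdef]
    exact hmono (by simp [Fin.le_def])
  -- indicators
  set χX : Fin n → ℝ := fun i => if i ∈ X then 1 else 0 with hχX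
  set χY : Fin n → ℝ := fun i => if i ∈ Y then 1 else 0 with hχY
  have hSX : ∑ i, χX i = x := by
    rw [hχX, hxdef]; simp [Finset.sum_ite_mem]
  have hSY : ∑ i, χY i = y := by
    rw [hχY, hydef]; simp [Finset.sum_ite_mem]
  have hSXX : ∑ i, χX i * χX i = x := by
    rw [← hSX]
    exact Finset.sum_congr rfl fun i _ => by rw [hχX]; by_cases h : i ∈ X <;> simp [h]
  have hSYY : ∑ i, χY i * χY i = y := by
    rw [← hSY]
    exact Finset.sum_congr rfl fun i _ => by rw [hχY]; by_cases h : i ∈ Y <;> simp [h]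
  have hSXY : ∑ i, χX i * χY i = 0 := by
    apply Finset.sum_eq_zero
    intro i _
    rw [hχX, hχY]
    by_cases h : i ∈ X
    · have : i ∉ Y := Finset.disjoint_left.mp hXY h
      simp [h, this]
    · simp [h]
  -- test vectors
  set u : Fin n → ℝ := fun i => χX i - x/N with hu
  set v : Fin n → ℝ := fun i => χY i - y/N with hv
  have husum : ∑ i, u i = 0 := by
    rw [hu]
    rw [Finset.sum_sub_distrib, hSX, Finset.sum_const, Finset.card_univ, Fintype.card_fin,
      nsmul_eq_mul, ← hNdef]
    field_simp
    ring
  have hvsum : ∑ i, v i = 0 := by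
    rw [hv]
    rw [Finset.sum_sub_distrib, hSY, Finset.sum_const, Finset.card_univ, Fintype.card_fin,
      nsmul_eq_mul, ← hNdef]
    field_simp
    ring
  -- dot products
  have hdot : ∀ (f g : Fin n → ℝ) (cf cg Sf Sg Sfg : ℝ), (∑ i, f i = Sf) → (∑ i, g i = Sg) →
      (∑ i, f i * g i = Sfg) →
      (fun i => f i - cf) ⬝ᵥ (fun i => g i - cg) = Sfg - cg*Sf - cf*Sg + N*(cf*cg) := by
    intro f g cf cg Sf Sg Sfg h1 h2 h3
    simp only [dotProduct]
    have hterm : ∀ i : Fin n, (f i - cf) * (g i - cg) = f i * g i - cg * f i - cf * g i + cf*cg :=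
      fun i => by ring
    rw [Finset.sum_congr rfl fun i _ => hterm i]
    rw [Finset.sum_add_distrib, Finset.sum_sub_distrib, Finset.sum_sub_distrib,
      ← Finset.mul_sum, ← Finset.mul_sum, Finset.sum_const, Finset.card_univ, Fintype.card_fin,
      nsmul_eq_mul, h1, h2, h3, ← hNdef]
  have hUU : u ⬝ᵥ u = x - x^2/N := by
    rw [hu, hdot χX χX (x/N) (x/N) x x x hSX hSX hSXX]
    field_simp; ring
  have hVV : v ⬝ᵥ v = y - y^2/N := by
    rw [hv, hdot χY χY (y/N) (y/N) y y y hSY hSY hSYY]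
    field_simp; ring
  have hUV : u ⬝ᵥ v = -(x*y)/N := by
    rw [hu, hv, hdot χX χY (x/N) (y/N) x y 0 hSX hSY hSXY]
    field_simp; ring
  -- Laplacian bilinear form vanishes
  have hconst : L *ᵥ (fun _ => (1:ℝ)) = 0 := by
    rw [hLdef]; exact SimpleGraph.lapMatrix_mulVec_const_eq_zero (G := G)
  have hXLY : χX ⬝ᵥ (L *ᵥ χY) = 0 := by
    simp only [dotProduct, Matrix.mulVec, dotProduct]
    apply Finset.sum_eq_zero
    intro i _
    by_cases hiX : i ∈ X
    · rw [mul_comm]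
      apply mul_eq_zero_of_left
      apply Finset.sum_eq_zero
      intro j _
      by_cases hjY : j ∈ Y
      · have hne : i ≠ j := fun hij => (Finset.disjoint_left.mp hXY hiX) (hij ▸ hjY)
        have hL0 : L i j = 0 := by
          rw [hLdef, SimpleGraph.lapMatrix, Matrix.sub_apply, SimpleGraph.degMatrix,
            Matrix.diagonal_apply_ne _ hne, SimpleGraph.adjMatrix_apply,
            if_neg (hnoedge i hiX j hjY)]
          ring
        rw [hL0]; ring
      · rw [hχY]; simp [hjY]
    · rw [hχX]; simp [hiX]
  have h1LY : (fun _ => (1:ℝ)) ⬝ᵥ (L *ᵥ χY) = 0 := by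
    rw [dotProduct_mulVec, ← Matrix.mulVec_transpose, (SimpleGraph.isSymm_lapMatrix ℝ G).eq, hconst,
      zero_dotProduct]
  have hLv : L *ᵥ v = L *ᵥ χY := by
    have hveq : v = χY - (y/N) • (fun _ => (1:ℝ)) := by
      funext i; rw [hv]; simp [smul_eq_mul]
    rw [hveq, Matrix.mulVec_sub, Matrix.mulVec_smul, hconst]
    simp
  have hB : u ⬝ᵥ (L *ᵥ v) = 0 := by
    have hueq : u = χX - (x/N) • (fun _ => (1:ℝ)) := by
      funext i; rw [hu]; simp [smul_eq_mul]
    rw [hLv, hueq, sub_dotProduct, smul_dotProduct, hXLY, h1LY]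
    simp
  have hB' : v ⬝ᵥ (L *ᵥ u) = 0 := by
    rw [dotProduct_mulVec, ← Matrix.mulVec_transpose, (SimpleGraph.isSymm_lapMatrix ℝ G).eq,
      dotProduct_comm]
    exact hB
  -- combined vectors
  set s : ℝ := y/x with hs
  set w1 : Fin n → ℝ := s • u + v with hw1
  set w2 : Fin n → ℝ := s • u - v with hw2
  have hw1sum : ∑ i, w1 i = 0 := by
    rw [hw1]
    simp only [Pi.add_apply, Pi.smul_apply, smul_eq_mul]
    rw [Finset.sum_add_distrib, ← Finset.mul_sum, husum, hvsum]; ring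
  have hw2sum : ∑ i, w2 i = 0 := by
    rw [hw2]
    simp only [Pi.sub_apply, Pi.smul_apply, smul_eq_mul]
    rw [Finset.sum_sub_distrib, ← Finset.mul_sum, husum, hvsum]; ring
  have qeq : w1 ⬝ᵥ (L *ᵥ w1) = w2 ⬝ᵥ (L *ᵥ w2) := by
    rw [hw1, hw2]
    simp only [Matrix.mulVec_add, Matrix.mulVec_sub, Matrix.mulVec_smul,
      dotProduct_add, dotProduct_sub, add_dotProduct,
      sub_dotProduct, smul_dotProduct, dotProduct_smul, smul_eq_mul]
    rw [hB, hB']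
    ring
  have n1 : w1 ⬝ᵥ w1 = (y/x)^2*(x - x^2/N) + 2*(y/x)*(-(x*y)/N) + (y - y^2/N) := by
    rw [hw1]
    simp only [dotProduct_add, add_dotProduct, smul_dotProduct,
      dotProduct_smul, smul_eq_mul]
    rw [show u ⬝ᵥ v = v ⬝ᵥ u from dotProduct_comm u v] at hUV ⊢
    rw [hUU, hUV, hVV, hs]
    ring
  have n2 : w2 ⬝ᵥ w2 = (y/x)^2*(x - x^2/N) - 2*(y/x)*(-(x*y)/N) + (y - y^2/N) := by
    rw [hw2]
    simp only [dotProduct_sub, sub_dotProduct, smul_dotProduct,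
      dotProduct_smul, smul_eq_mul]
    rw [show u ⬝ᵥ v = v ⬝ᵥ u from dotProduct_comm u v] at hUV ⊢
    rw [hUU, hUV, hVV, hs]
    ring
  have low := (rayleigh_bounds hn G μ hmono e he hlast w2 hw2sum).1
  have up := (rayleigh_bounds hn G μ hmono e he hlast w1 hw1sum).2
  rw [← hLdef] at low up
  rw [n2, ← hadef] at low
  rw [n1, ← hmdef] at up
  rw [qeq] at up
  have H : a * ((y/x)^2*(x - x^2/N) - 2*(y/x)*(-(x*y)/N) + (y - y^2/N)) ≤
      m * ((y/x)^2*(x - x^2/N) + 2*(y/x)*(-(x*y)/N) + (y - y^2/N)) := le_trans low up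
  have final := arith_final x y N m a hx1 hxy hsum_le ha0 ham H
  rw [hxdef, hNdef, hmdef, hadef] at final
  exact_mod_cast final
end

section
/- Let k, t, s, n be integers with k ≥ 2, 1 ≤ t ≤ k−1, t ≤ s, n ≥ ⌊(2k+3)s/2⌋ + 1, and 2kn ≥ (2k²+5k+1)t + k²+5k+2. Then C(n − ⌊(2k+1)s/2⌋ − 1, 2) + s·(⌊(2k+1)s/2⌋ + 1) ≤ C(n − ⌊(2k+1)t/2⌋ − 1, 2) + t·(⌊(2k+1)t/2⌋ + 1), where C(m,2) = m(m−1)/2. -/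
/-- `C(m,2) = m(m−1)/2` (an integer, since `m(m−1)` is always even). -/
def C2 (m : ℤ) : ℤ := m * (m - 1) / 2

lemma floor_int_two (a : ℤ) : ⌊(a : ℚ) / 2⌋ = a / 2 := by
  have := Rat.floor_intCast_div_natCast a 2
  simpa using this

lemma C2_eq (m : ℤ) : 2 * C2 m = m * (m - 1) := by
  unfold C2
  have h : (2 : ℤ) ∣ m * (m - 1) := (Int.even_mul_pred_self m).two_dvd
  omega


lemma aux_e (k t s r q : ℤ) (hk : 2 ≤ k) (hs : t + 2 ≤ s) (hr : r ≤ 1) (hq : 0 ≤ q) :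
    (0:ℤ) ≤ 2 * ((2 * k + 1) * (s - t) - r + q) := by
  nlinarith [mul_nonneg (by omega : (0:ℤ) ≤ 2 * k + 1) (by omega : (0:ℤ) ≤ s - t - 2)]

lemma aux_inner (k t s : ℤ) (hk : 2 ≤ k) (ht1 : 1 ≤ t) (htk : t ≤ k - 1) (hs : t + 2 ≤ s) :
    (0:ℤ) ≤ 4 * k ^ 2 * (s - t) + 4 * k * s - 12 * k * t - 8 * k + s - 5 * t - 12 := by
  nlinarith [mul_nonneg (mul_nonneg (by omega : (0:ℤ) ≤ k) (by omega : (0:ℤ) ≤ k)) (by omega : (0:ℤ) ≤ s - t - 2),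
    mul_nonneg (by omega : (0:ℤ) ≤ k) (by omega : (0:ℤ) ≤ s - t - 2),
    mul_nonneg (by omega : (0:ℤ) ≤ k) (by omega : (0:ℤ) ≤ k - t - 1),
    mul_nonneg (by omega : (0:ℤ) ≤ s - t - 2) (by omega : (0:ℤ) ≤ t - 1)]

set_option maxHeartbeats 1000000 in
/-- Consolidated inequality behind the case analysis in the proof of Theorem 1.3:
for integers `k ≥ 2`, `1 ≤ t ≤ k−1`, `t ≤ s`, `n ≥ ⌊(2k+3)s/2⌋ + 1` and
`2kn ≥ (2k²+5k+1)t + k²+5k+2`, one has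
`C(n − ⌊(2k+1)s/2⌋ − 1, 2) + s(⌊(2k+1)s/2⌋ + 1) ≤ C(n − ⌊(2k+1)t/2⌋ − 1, 2) + t(⌊(2k+1)t/2⌋ + 1)`. -/
theorem stmt8 (k t s n : ℤ) (hk : 2 ≤ k) (ht1 : 1 ≤ t) (htk : t ≤ k - 1)
    (hts : t ≤ s) (hn1 : ⌊((2 * k + 3) * s : ℚ) / 2⌋ + 1 ≤ n)
    (hn2 : (2 * k ^ 2 + 5 * k + 1) * t + k ^ 2 + 5 * k + 2 ≤ 2 * k * n) :
    C2 (n - ⌊((2 * k + 1) * s : ℚ) / 2⌋ - 1) + s * (⌊((2 * k + 1) * s : ℚ) / 2⌋ + 1)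
      ≤ C2 (n - ⌊((2 * k + 1) * t : ℚ) / 2⌋ - 1) + t * (⌊((2 * k + 1) * t : ℚ) / 2⌋ + 1) := by
  have e1 : ((2 * k + 1) * s : ℚ) = (((2 * k + 1) * s : ℤ) : ℚ) := by push_cast; ring
  have e2 : ((2 * k + 1) * t : ℚ) = (((2 * k + 1) * t : ℤ) : ℚ) := by push_cast; ring
  have e3 : ((2 * k + 3) * s : ℚ) = (((2 * k + 3) * s : ℤ) : ℚ) := by push_cast; ring
  rw [e1, floor_int_two, e2, floor_int_two]
  rw [e3, floor_int_two] at hn1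
  -- remainders
  set r := s % 2 with hr
  set q := t % 2 with hq
  have hms : ((2 * k + 1) * s) % 2 = r := by
    have h : (2 * k + 1) * s = s + 2 * (k * s) := by ring
    rw [h]; simp [Int.add_mul_emod_self_left, hr]
  have hmt : ((2 * k + 1) * t) % 2 = q := by
    have h : (2 * k + 1) * t = t + 2 * (k * t) := by ring
    rw [h]; simp [Int.add_mul_emod_self_left, hq]
  have hms' : ((2 * k + 3) * s) % 2 = r := by
    have h : (2 * k + 3) * s = s + 2 * (k * s + s) := by ring
    rw [h]; simp [Int.add_mul_emod_self_left, hr]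
  have hAs : 2 * ((2 * k + 1) * s / 2) = (2 * k + 1) * s - r := by omega
  have hAt : 2 * ((2 * k + 1) * t / 2) = (2 * k + 1) * t - q := by omega
  have hBs : 2 * ((2 * k + 3) * s / 2) = (2 * k + 3) * s - r := by omega
  set A := (2 * k + 1) * s / 2 with hA
  set B := (2 * k + 1) * t / 2 with hB
  have h2 : (n - A - 1) * (n - A - 2) + 2 * s * (A + 1) ≤
      (n - B - 1) * (n - B - 2) + 2 * t * (B + 1) →
      C2 (n - A - 1) + s * (A + 1) ≤ C2 (n - B - 1) + t * (B + 1) := by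
    intro h
    have l1 := C2_eq (n - A - 1)
    have l2 := C2_eq (n - B - 1)
    nlinarith [h, l1, l2]
  apply h2
  have h4 : ∀ X Y : ℤ, 4 * X ≤ 4 * Y → X ≤ Y := by intro X Y h; omega
  apply h4
  have exA : 4 * ((n - A - 1) * (n - A - 2) + 2 * s * (A + 1)) =
      (2 * n - 2 * A - 2) * (2 * n - 2 * A - 4) + 4 * s * (2 * A + 2) := by ring
  have exB : 4 * ((n - B - 1) * (n - B - 2) + 2 * t * (B + 1)) =
      (2 * n - 2 * B - 2) * (2 * n - 2 * B - 4) + 4 * t * (2 * B + 2) := by ring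
  rw [exA, exB, hAs, hAt]
  have hn1' : (2 * k + 3) * s - r + 2 ≤ 2 * n := by omega
  have hr01 : r = 0 ∨ r = 1 := by omega
  have hq01 : q = 0 ∨ q = 1 := by omega
  clear_value A B r q
  clear h2 h4 exA exB hn1 hAs hAt hBs hms hmt hms' hA hB e1 e2 e3
  -- case split on s vs t
  rcases eq_or_lt_of_le hts with hst | hst
  · -- s = t : both sides equal
    have hrq : r = q := by omega
    subst hst; subst hrq
    exact le_refl _
  rcases (by omega : s = t + 1 ∨ t + 2 ≤ s) with hst1 | hst2
  · -- s = t + 1 : use the 2kn lower bound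
    have hrq : r + q = 1 := by omega
    subst hst1
    have hC1 : (0:ℤ) ≤ 2 * k * n - ((2 * k ^ 2 + 5 * k + 1) * t + k ^ 2 + 5 * k + 2) := by
      linarith
    refine le_of_mul_le_mul_left ?_ (show (0:ℤ) < k by omega)
    have he : (0:ℤ) ≤ 2 * (2 * k + 1 - r + q) := by omega
    rcases hq01 with hq0 | hq1
    · have hr1 : r = 1 := by omega
      subst hq0; subst hr1
      nlinarith [mul_nonneg he hC1]
    · have hr0 : r = 0 := by omega
      subst hq1; subst hr0
      nlinarith [mul_nonneg he hC1, mul_nonneg (by omega : (0:ℤ) ≤ k) (by omega : (0:ℤ) ≤ t)]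
  · -- s ≥ t + 2 : use the n ≥ ⌊(2k+3)s/2⌋+1 bound
    have hC2b : (0:ℤ) ≤ 2 * n - ((2 * k + 3) * s - r + 2) := by omega
    have hu2 : (0:ℤ) ≤ s - t - 2 := by omega
    have hu : (0:ℤ) ≤ s - t := by omega
    have hk0 : (0:ℤ) ≤ k := by omega
    have he : (0:ℤ) ≤ 2 * ((2 * k + 1) * (s - t) - r + q) :=
      aux_e k t s r q hk hst2 (by omega) (by omega)
    have hinner : (0:ℤ) ≤ 4 * k ^ 2 * (s - t) + 4 * k * s - 12 * k * t - 8 * k + s - 5 * t - 12 :=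
      aux_inner k t s hk ht1 htk hst2
    have hprod := mul_nonneg hu hinner
    have hkc := mul_nonneg hk0 hu2
    rcases hr01 with hr0 | hr1 <;> rcases hq01 with hq0 | hq1 <;>
      [subst hr0 hq0; subst hr0 hq1; subst hr1 hq0; subst hr1 hq1] <;>
      nlinarith [mul_nonneg he hC2b, hprod, hkc]
end

section
/- Let k and t be integers with k ≥ 2 and t ≥ 1, and let n be an integer with n ≥ ⌊(2k+3)t/2⌋ + 2. Let G = K_t ∨ (K_{n − ⌊(2k+3)t/2⌋ − 1} ∪ (⌊(2k+1)t/2⌋ + 1)·K_1), the join of a complete graph on t vertices with the disjoint union of a complete graph on n − ⌊(2k+3)t/2⌋ − 1 vertices and ⌊(2k+1)t/2⌋ + 1 isolated vertices. Then |E(G)| = C(n − ⌊(2k+1)t/2⌋ − 1, 2) + t·(⌊(2k+1)t/2⌋ + 1), and there exists a subset S ⊆ V(G) (namely S = V(K_t), with |S| = t) such that 2·i(G−S) > (2k+1)·|S|. -/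
/-- Rank of a vertex of `K_t ∨ (K_a ∪ b·K_1)`: `0` on `K_t`, `1` on `K_a`, `2` on the
isolated part. -/
def rnk {t a b : ℕ} : Fin t ⊕ (Fin a ⊕ Fin b) → ℕ
  | Sum.inl _ => 0
  | Sum.inr (Sum.inl _) => 1
  | Sum.inr (Sum.inr _) => 2

/-- The join `K_t ∨ (K_a ∪ b·K_1)`: every vertex of `K_t` is adjacent to all other
vertices, and the vertices of `K_a` are moreover pairwise adjacent. -/
def joinGraph (t a b : ℕ) : SimpleGraph (Fin t ⊕ (Fin a ⊕ Fin b)) where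
  Adj u v := u ≠ v ∧ (rnk u = 0 ∨ rnk v = 0 ∨ (rnk u = 1 ∧ rnk v = 1))
  symm := by constructor; rintro u v ⟨h1, h2⟩; exact ⟨h1.symm, by tauto⟩
  loopless := by constructor; rintro u ⟨h, -⟩; exact h rfl

instance (t a b : ℕ) : DecidableRel (joinGraph t a b).Adj := fun u v =>
  decidable_of_iff (u ≠ v ∧ (rnk u = 0 ∨ rnk v = 0 ∨ (rnk u = 1 ∧ rnk v = 1))) Iff.rfl

open Finset

section JoinGraph

variable (t a b : ℕ)

lemma neighborFinset_joinGraph_inl (i : Fin t) :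
    (joinGraph t a b).neighborFinset (.inl i) = univ.erase (.inl i) := by
  ext v
  rw [SimpleGraph.mem_neighborFinset]
  simp [joinGraph, rnk, eq_comm]

lemma neighborFinset_joinGraph_inr_inl (j : Fin a) :
    (joinGraph t a b).neighborFinset (.inr (.inl j)) =
      (univ.disjSum (univ.disjSum ∅)).erase (.inr (.inl j)) := by
  ext (i | x | y) <;> rw [SimpleGraph.mem_neighborFinset] <;> simp [joinGraph, rnk, eq_comm]

lemma neighborFinset_joinGraph_inr_inr (j : Fin b) :
    (joinGraph t a b).neighborFinset (.inr (.inr j)) = univ.disjSum ∅ := by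
  ext (i | x | y) <;> rw [SimpleGraph.mem_neighborFinset] <;> simp [joinGraph, rnk]

lemma degree_joinGraph_inl (i : Fin t) :
    (joinGraph t a b).degree (.inl i) = t + a + b - 1 := by
  simp [← SimpleGraph.card_neighborFinset_eq_degree, neighborFinset_joinGraph_inl, add_assoc]

lemma degree_joinGraph_inr_inl (j : Fin a) :
    (joinGraph t a b).degree (.inr (.inl j)) = t + a - 1 := by
  simp [← SimpleGraph.card_neighborFinset_eq_degree, neighborFinset_joinGraph_inr_inl]

lemma degree_joinGraph_inr_inr (j : Fin b) :
    (joinGraph t a b).degree (.inr (.inr j)) = t := by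
  simp [← SimpleGraph.card_neighborFinset_eq_degree, neighborFinset_joinGraph_inr_inr]

lemma card_edgeFinset_joinGraph :
    #(joinGraph t a b).edgeFinset = (t + a).choose 2 + t * b := by
  have hsum := (joinGraph t a b).sum_degrees_eq_twice_card_edges
  simp only [Fintype.sum_sum_type, degree_joinGraph_inl, degree_joinGraph_inr_inl,
    degree_joinGraph_inr_inr, sum_const, card_univ, Fintype.card_fin, smul_eq_mul] at hsum
  have hchoose : 2 * (t + a).choose 2 = (t + a) * (t + a - 1) := by
    rw [Nat.choose_two_right, Nat.mul_div_cancel' (Nat.even_mul_pred_self _).two_dvd]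
  rcases t with _ | t
  · simp at hsum ⊢; lia
  · rw [show t + 1 + a + b - 1 = t + a + b by lia] at hsum
    rw [show t + 1 + a - 1 = t + a by lia] at hsum hchoose
    linarith

lemma le_isoCount_joinGraph :
    b ≤ isoCount (joinGraph t a b) (univ.map .inl) := by
  refine le_of_eq_of_le (card_fin b).symm (card_le_card_of_injOn (fun j => .inr (.inr j)) ?_ ?_)
  · intro j _
    simp [joinGraph, rnk]
  · intro x _ y _ h
    simpa using h

end JoinGraph

theorem stmt14_general (k t n : ℕ)
    (hn : ((2 * k + 3) * t) / 2 + 2 ≤ n) :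
    (joinGraph t (n - ((2 * k + 3) * t) / 2 - 1)
        (((2 * k + 1) * t) / 2 + 1)).edgeFinset.card
      = Nat.choose (n - ((2 * k + 1) * t) / 2 - 1) 2 + t * (((2 * k + 1) * t) / 2 + 1)
    ∧ ∃ S : Finset (Fin t ⊕ (Fin (n - ((2 * k + 3) * t) / 2 - 1)
          ⊕ Fin (((2 * k + 1) * t) / 2 + 1))),
        S.card = t ∧
        (2 * k + 1) * S.card
          < 2 * isoCount (joinGraph t (n - ((2 * k + 3) * t) / 2 - 1)
              (((2 * k + 1) * t) / 2 + 1)) S := by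
  have hfloor : (2 * k + 3) * t / 2 = (2 * k + 1) * t / 2 + t := by
    rw [show (2 * k + 3) * t = (2 * k + 1) * t + 2 * t by ring]
    lia
  refine ⟨?_, univ.map .inl, by simp, ?_⟩
  · rw [card_edgeFinset_joinGraph]
    congr 2
    lia
  · have := le_isoCount_joinGraph t (n - (2 * k + 3) * t / 2 - 1) ((2 * k + 1) * t / 2 + 1)
    rw [card_map, card_univ, Fintype.card_fin]
    lia

/-- **Remark 3.1.** For `k ≥ 2`, `t ≥ 1` and `n ≥ ⌊(2k+3)t/2⌋ + 2`, the graph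
`G = K_t ∨ (K_{n−⌊(2k+3)t/2⌋−1} ∪ (⌊(2k+1)t/2⌋+1)·K_1)` (of order `n`) satisfies
`|E(G)| = C(n − ⌊(2k+1)t/2⌋ − 1, 2) + t(⌊(2k+1)t/2⌋ + 1)`, and there is a vertex subset
`S` with `|S| = t` (namely `V(K_t)`) such that `2·i(G−S) > (2k+1)·|S|`. -/
theorem stmt14 (k t n : ℕ) (hk : 2 ≤ k) (ht : 1 ≤ t)
    (hn : ((2 * k + 3) * t) / 2 + 2 ≤ n) :
    (joinGraph t (n - ((2 * k + 3) * t) / 2 - 1)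
        (((2 * k + 1) * t) / 2 + 1)).edgeFinset.card
      = Nat.choose (n - ((2 * k + 1) * t) / 2 - 1) 2 + t * (((2 * k + 1) * t) / 2 + 1)
    ∧ ∃ S : Finset (Fin t ⊕ (Fin (n - ((2 * k + 3) * t) / 2 - 1)
          ⊕ Fin (((2 * k + 1) * t) / 2 + 1))),
        S.card = t ∧
        (2 * k + 1) * S.card
          < 2 * isoCount (joinGraph t (n - ((2 * k + 3) * t) / 2 - 1)
              (((2 * k + 1) * t) / 2 + 1)) S :=
  stmt14_general k t n hn
end
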